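/- arXiv:2112.11412 — 5 statements merged into one kernel-verified Lean document; each statement's English description precedes it below -/
import Mathlib

section
/- For any nonzero integer q and any real L ≥ 1, the sum over integers ℓ with 1 ≤ ℓ ≤ L of gcd(ℓ, q)·ℓ/φ(ℓ) is O(τ(q)²·L), with an absolute implied constant. -/
/-!
Bound `gcd ℓ q` by the sum of the divisors `d ∣ q` dividing `ℓ` and write `ℓ = d k`; since
`φ (d k) ≥ φ d φ k`, the sum is at most `∑_{d ∣ q} (d² / φ d) ∑_{k ≤ L / d} k / φ k`.
From `k = ∑_{e ∣ k} φ (k / e)` one gets `k / φ k ≤ ∑_{e ∣ k} 1 / φ e`, so the inner sum is at most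
`c L / d` with `c = ∑ 1 / (n φ n)`, which converges because `n ≤ 2 φ n ²`. Finally
`d / φ d ≤ τ d ≤ τ q`.
-/

open Finset Nat

namespace Nat

/-- The factor `gcd 2 n` makes the bound multiplicative: `p ^ k ≤ φ (p ^ k) ^ 2` fails only for
`p = 2`. -/
theorem le_gcd_two_mul_totient_sq (n : ℕ) : n ≤ Nat.gcd 2 n * φ n ^ 2 := by
  induction n using Nat.recOnPosPrimePosCoprime with
  | zero => simp
  | one => simp
  | prime_pow p k hp hk =>
    obtain ⟨j, rfl⟩ := Nat.exists_eq_add_of_lt hk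
    rw [zero_add, totient_prime_pow_succ hp, pow_succ]
    rcases eq_or_ne p 2 with rfl | hp2
    · rw [Nat.gcd_eq_left (dvd_mul_left 2 _)]
      nlinarith [Nat.one_le_two_pow (n := j)]
    · have hp3 : 3 ≤ p := (hp.two_le.lt_of_ne hp2.symm).succ_le
      have hcop : Nat.gcd 2 (p ^ j * p) = 1 := by
        rw [← pow_succ]
        exact Coprime.pow_right _ ((coprime_primes prime_two hp).2 hp2.symm)
      have hp_le : p ≤ (p - 1) ^ 2 := by
        obtain ⟨m, rfl⟩ := Nat.exists_eq_add_of_le hp3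
        rw [show 3 + m - 1 = m + 2 by omega]
        nlinarith
      calc p ^ j * p ≤ (p ^ j) ^ 2 * (p - 1) ^ 2 :=
            Nat.mul_le_mul (Nat.le_self_pow two_ne_zero _) hp_le
        _ = Nat.gcd 2 (p ^ j * p) * (p ^ j * (p - 1)) ^ 2 := by rw [hcop]; ring
  | coprime a b _ _ hab iha ihb =>
    rw [totient_mul hab, Coprime.gcd_mul 2 hab]
    calc a * b ≤ (Nat.gcd 2 a * φ a ^ 2) * (Nat.gcd 2 b * φ b ^ 2) := Nat.mul_le_mul iha ihb
      _ = _ := by ring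

theorem le_two_mul_totient_sq (n : ℕ) : n ≤ 2 * φ n ^ 2 :=
  (le_gcd_two_mul_totient_sq n).trans (Nat.mul_le_mul_right _ (Nat.gcd_le_left n two_pos))

theorem Icc_filter_dvd_eq_map (N : ℕ) {d : ℕ} (hd : 0 < d) :
    {ℓ ∈ Icc 1 N | d ∣ ℓ} = (Icc 1 (N / d)).map ⟨(d * ·), mul_right_injective₀ hd.ne'⟩ := by
  ext ℓ
  simp only [mem_filter, mem_Icc, mem_map, Function.Embedding.coeFn_mk]
  constructor
  · rintro ⟨⟨hℓ, hℓN⟩, k, rfl⟩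
    refine ⟨k, ⟨Nat.pos_of_mul_pos_left hℓ, (Nat.le_div_iff_mul_le hd).2 ?_⟩, rfl⟩
    rwa [mul_comm]
  · rintro ⟨k, ⟨hk, hkN⟩, rfl⟩
    exact ⟨⟨Nat.mul_pos hd hk, (Nat.mul_le_mul_left d hkN).trans (Nat.mul_div_le N d)⟩,
      dvd_mul_right d k⟩

end Nat

theorem one_div_mul_totient_le (n : ℕ) :
    1 / ((n : ℝ) * φ n) ≤ √2 * (1 / (n : ℝ) ^ (3 / 2 : ℝ)) := by
  rcases Nat.eq_zero_or_pos n with rfl | hn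
  · simp
  have hn' : (0 : ℝ) < n := by exact_mod_cast hn
  have hφ : (0 : ℝ) < φ n := by exact_mod_cast totient_pos.2 hn
  have hsqrt : √(n : ℝ) ≤ √2 * φ n := by
    rw [← Real.sqrt_sq hφ.le, ← Real.sqrt_mul zero_le_two]
    exact Real.sqrt_le_sqrt (by exact_mod_cast le_two_mul_totient_sq n)
  have hrpow : (n : ℝ) ^ (3 / 2 : ℝ) = n * √(n : ℝ) := by
    rw [show (3 / 2 : ℝ) = 1 + 1 / 2 by norm_num, Real.rpow_add hn', Real.rpow_one,
      Real.sqrt_eq_rpow]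
  rw [hrpow, mul_one_div, div_le_div_iff₀ (by positivity) (by positivity)]
  nlinarith [mul_le_mul_of_nonneg_left hsqrt hn'.le]

theorem summable_one_div_mul_totient : Summable fun n : ℕ => 1 / ((n : ℝ) * φ n) :=
  ((Real.summable_one_div_nat_rpow.2 (by norm_num)).mul_left √2).of_nonneg_of_le
    (fun _ => by positivity) one_div_mul_totient_le

theorem div_totient_le_sum_divisors (n : ℕ) :
    (n : ℝ) / φ n ≤ ∑ d ∈ n.divisors, 1 / (φ d : ℝ) := by
  rcases Nat.eq_zero_or_pos n with rfl | hn
  · simp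
  have hφ : (0 : ℝ) < φ n := by exact_mod_cast totient_pos.2 hn
  have hsum : (n : ℝ) = ∑ d ∈ n.divisors, (φ (n / d) : ℝ) := by
    rw [sum_div_divisors n (fun d => (φ d : ℝ))]
    exact_mod_cast (sum_totient n).symm
  rw [div_le_iff₀ hφ, sum_mul, hsum]
  refine sum_le_sum fun d hd => ?_
  have hφd : (0 : ℝ) < φ d := by exact_mod_cast totient_pos.2 (pos_of_mem_divisors hd)
  rw [one_div_mul_eq_div, le_div_iff₀ hφd]
  exact_mod_cast (Nat.div_mul_cancel (dvd_of_mem_divisors hd)) ▸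
    totient_super_multiplicative (n / d) d

theorem div_totient_le_card_divisors (n : ℕ) : (n : ℝ) / φ n ≤ #n.divisors := by
  refine (div_totient_le_sum_divisors n).trans ?_
  have hle : ∀ d ∈ n.divisors, 1 / (φ d : ℝ) ≤ 1 := fun d hd =>
    div_le_one_of_le₀ (by exact_mod_cast totient_pos.2 (pos_of_mem_divisors hd)) (by positivity)
  simpa using sum_le_card_nsmul _ _ 1 hle

theorem cast_mul_div_totient_le (a b : ℕ) :
    ((a * b : ℕ) : ℝ) / φ (a * b) ≤ (a / φ a) * (b / φ b) := by
  rcases Nat.eq_zero_or_pos a with rfl | ha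
  · simp
  rcases Nat.eq_zero_or_pos b with rfl | hb
  · simp
  rw [_root_.div_mul_div_comm, cast_mul]
  exact div_le_div_of_nonneg_left (by positivity)
    (by have := totient_pos.2 ha; have := totient_pos.2 hb; positivity)
    (by exact_mod_cast totient_super_multiplicative a b)

theorem sum_div_totient_le (K : ℕ) :
    ∑ k ∈ Icc 1 K, (k : ℝ) / φ k ≤ (∑' n : ℕ, 1 / ((n : ℝ) * φ n)) * K := by
  let f : ArithmeticFunction ℝ := ⟨fun d => 1 / (φ d : ℝ), by simp⟩
  calc ∑ k ∈ Icc 1 K, (k : ℝ) / φ k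
      ≤ ∑ k ∈ Ioc 0 K, (f * ArithmeticFunction.zeta) k := by
        refine sum_le_sum fun k _ => ?_
        rw [ArithmeticFunction.coe_mul_zeta_apply]
        exact div_totient_le_sum_divisors k
    _ = ∑ d ∈ Ioc 0 K, 1 / (φ d : ℝ) * (K / d : ℕ) :=
        ArithmeticFunction.sum_Ioc_mul_zeta_eq_sum f K
    _ ≤ ∑ d ∈ Ioc 0 K, 1 / ((d : ℝ) * φ d) * K := by
        refine sum_le_sum fun d _ => ?_
        calc 1 / (φ d : ℝ) * (K / d : ℕ) ≤ 1 / (φ d : ℝ) * (K / d) := by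
              gcongr; exact cast_div_le
          _ = 1 / ((d : ℝ) * φ d) * K := by ring
    _ ≤ (∑' n : ℕ, 1 / ((n : ℝ) * φ n)) * K := by
        rw [← sum_mul]
        gcongr
        exact summable_one_div_mul_totient.sum_le_tsum _ fun _ _ => by positivity

theorem mul_sum_filter_dvd_div_totient_le (N : ℕ) {d : ℕ} (hd : 0 < d) :
    d * ∑ ℓ ∈ Icc 1 N with d ∣ ℓ, (ℓ : ℝ) / φ ℓ ≤
      (∑' n : ℕ, 1 / ((n : ℝ) * φ n)) * #d.divisors * N := by
  have hd' : (0 : ℝ) < d := by exact_mod_cast hd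
  rw [Nat.Icc_filter_dvd_eq_map N hd, sum_map]
  calc (d : ℝ) * ∑ k ∈ Icc 1 (N / d), ((d * k : ℕ) : ℝ) / φ (d * k)
      ≤ d * ∑ k ∈ Icc 1 (N / d), (d / φ d) * ((k : ℝ) / φ k) := by
        gcongr with k
        exact cast_mul_div_totient_le d k
    _ ≤ d * ((d / φ d) * ((∑' n : ℕ, 1 / ((n : ℝ) * φ n)) * (N / d : ℕ))) := by
        rw [← mul_sum]
        gcongr
        exact sum_div_totient_le _
    _ ≤ d * ((d / φ d) * ((∑' n : ℕ, 1 / ((n : ℝ) * φ n)) * (N / d))) := by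
        gcongr
        exact cast_div_le
    _ = (∑' n : ℕ, 1 / ((n : ℝ) * φ n)) * (d / φ d) * N := by field_simp
    _ ≤ (∑' n : ℕ, 1 / ((n : ℝ) * φ n)) * #d.divisors * N := by
        gcongr
        exact div_totient_le_card_divisors d

theorem sum_gcd_mul_div_totient_le (Q N : ℕ) (hQ : Q ≠ 0) :
    ∑ ℓ ∈ Icc 1 N, (Nat.gcd ℓ Q : ℝ) * ℓ / φ ℓ ≤
      (∑' n : ℕ, 1 / ((n : ℝ) * φ n)) * #Q.divisors ^ 2 * N := by
  have hgcd : ∀ ℓ, (Nat.gcd ℓ Q : ℝ) * ℓ / φ ℓ ≤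
      ∑ d ∈ Q.divisors, if d ∣ ℓ then (d : ℝ) * (ℓ / φ ℓ) else 0 := by
    intro ℓ
    have hmem : Nat.gcd ℓ Q ∈ Q.divisors := mem_divisors.2 ⟨Nat.gcd_dvd_right ℓ Q, hQ⟩
    simpa [Nat.gcd_dvd_left, mul_div_assoc] using
      single_le_sum (f := fun d => if d ∣ ℓ then (d : ℝ) * (ℓ / φ ℓ) else 0)
        (fun _ _ => by positivity) hmem
  calc ∑ ℓ ∈ Icc 1 N, (Nat.gcd ℓ Q : ℝ) * ℓ / φ ℓ
      ≤ ∑ d ∈ Q.divisors, d * ∑ ℓ ∈ Icc 1 N with d ∣ ℓ, (ℓ : ℝ) / φ ℓ := by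
        refine (sum_le_sum fun ℓ _ => hgcd ℓ).trans_eq ?_
        rw [sum_comm]
        refine sum_congr rfl fun d _ => ?_
        rw [mul_sum, sum_filter]
    _ ≤ ∑ d ∈ Q.divisors, (∑' n : ℕ, 1 / ((n : ℝ) * φ n)) * #Q.divisors * N := by
        refine sum_le_sum fun d hd => ?_
        refine (mul_sum_filter_dvd_div_totient_le N (pos_of_mem_divisors hd)).trans ?_
        gcongr
        exact dvd_of_mem_divisors hd
    _ = (∑' n : ℕ, 1 / ((n : ℝ) * φ n)) * #Q.divisors ^ 2 * N := by
        rw [sum_const, nsmul_eq_mul]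
        ring

theorem stmt_1 : ∃ C : ℝ, 0 < C ∧ ∀ (q : ℤ), q ≠ 0 → ∀ (L : ℝ), 1 ≤ L →
    ∑ ℓ ∈ Finset.Icc 1 ⌊L⌋₊, (Nat.gcd ℓ q.natAbs : ℝ) * ℓ / (Nat.totient ℓ) ≤
      C * (q.natAbs.divisors.card : ℝ) ^ 2 * L := by
  refine ⟨∑' n : ℕ, 1 / ((n : ℝ) * φ n),
    summable_one_div_mul_totient.tsum_pos (fun _ => by positivity) 1 (by simp),
    fun q hq L hL => ?_⟩
  calc _ ≤ (∑' n : ℕ, 1 / ((n : ℝ) * φ n)) * #q.natAbs.divisors ^ 2 * ⌊L⌋₊ :=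
        sum_gcd_mul_div_totient_le _ _ (Int.natAbs_ne_zero.2 hq)
    _ ≤ _ := by
        gcongr
        exact Nat.floor_le (by linarith)
end

section
/- Define λ = 1 ∗ χ and λ' = χ ∗ log for a real Dirichlet character χ. Then for every positive integer n, λ'(n) = Λ(n) + ∑_{n = km, m > 1} Λ(k)·λ(m). In particular λ'(n) ≥ Λ(n) ≥ 0 when λ(m) ≥ 0 for all m. -/
/-!
With `F` the arithmetic function `χ`, we have `λ = F ∗ 1` and `λ' = F ∗ log = F ∗ (Λ ∗ 1) = Λ ∗ λ`.
Splitting off the term `m = 1` of `Λ ∗ λ`, where `λ(1) = 1`, gives the identity; the inequality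
follows because every remaining term `Λ(k) λ(m)` is nonnegative.
-/

open ArithmeticFunction Finset
open scoped ArithmeticFunction.zeta

namespace ArithmeticFunction

theorem sum_divisorsAntidiagonal_eq_add_sum_one_lt {R : Type*} [Semiring R]
    (f : ArithmeticFunction R) (g : ℕ → R) (n : ℕ) :
    ∑ de ∈ n.divisorsAntidiagonal, f de.1 * g de.2 =
      f n * g 1 + ∑ de ∈ n.divisorsAntidiagonal.filter (fun de => 1 < de.2), f de.1 * g de.2 := by
  rcases eq_or_ne n 0 with rfl | hn
  · simp
  have h_le_one : n.divisorsAntidiagonal.filter (fun de => ¬ 1 < de.2) = {(n, 1)} := by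
    ext ⟨d, e⟩
    simp only [mem_filter, mem_singleton, Nat.mem_divisorsAntidiagonal, Prod.mk.injEq]
    constructor
    · rintro ⟨⟨rfl, hde⟩, he⟩
      obtain rfl : e = 1 := by
        have : e ≠ 0 := by rintro rfl; simp at hde
        omega
      simp
    · rintro ⟨rfl, rfl⟩
      simp [hn]
  rw [← sum_filter_not_add_sum_filter _ (fun de => 1 < de.2), h_le_one, sum_singleton]

theorem sum_divisorsAntidiagonal_mul_log_eq (f : ℕ → ℝ) (n : ℕ) :
    ∑ de ∈ n.divisorsAntidiagonal, f de.1 * Real.log de.2 =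
      ∑ de ∈ n.divisorsAntidiagonal, Λ de.1 * ∑ d ∈ de.2.divisors, f d := by
  set F : ArithmeticFunction ℝ := toArithmeticFunction f
  have hF : ∀ k ≠ 0, F k = f k := fun k hk => if_neg hk
  have h_log : F * log = Λ * (F * ζ) := by
    rw [← vonMangoldt_mul_zeta]
    ring
  calc ∑ de ∈ n.divisorsAntidiagonal, f de.1 * Real.log de.2
      = (F * log) n := by
        rw [mul_apply]
        refine sum_congr rfl fun de hde => ?_
        rw [hF _ (Nat.ne_zero_of_mem_divisorsAntidiagonal hde).1, log_apply]
    _ = (Λ * (F * ζ)) n := by rw [h_log]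
    _ = ∑ de ∈ n.divisorsAntidiagonal, Λ de.1 * ∑ d ∈ de.2.divisors, f d := by
        rw [mul_apply]
        refine sum_congr rfl fun de _ => ?_
        rw [coe_mul_zeta_apply]
        congr 1
        exact sum_congr rfl fun d hd => hF d (Nat.pos_of_mem_divisors hd).ne'

end ArithmeticFunction

theorem stmt_9_general (q : ℕ) (χ : DirichletCharacter ℝ q) (n : ℕ)
    (lam lam' : ℕ → ℝ)
    (hlam : ∀ m : ℕ, lam m = ∑ d ∈ m.divisors, χ (d : ZMod q))
    (hlam' : ∀ m : ℕ, lam' m = ∑ de ∈ m.divisorsAntidiagonal,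
      χ ((de.1 : ℕ) : ZMod q) * Real.log de.2)
    (hpos : ∀ m : ℕ, 0 ≤ lam m) :
    lam' n = ArithmeticFunction.vonMangoldt n +
        ∑ de ∈ n.divisorsAntidiagonal.filter (fun de => 1 < de.2),
          ArithmeticFunction.vonMangoldt de.1 * lam de.2 ∧
      ArithmeticFunction.vonMangoldt n ≤ lam' n ∧
      (0 : ℝ) ≤ ArithmeticFunction.vonMangoldt n := by
  have h_conv : lam' n = ∑ de ∈ n.divisorsAntidiagonal, Λ de.1 * lam de.2 := by
    simp only [hlam', hlam]
    exact sum_divisorsAntidiagonal_mul_log_eq (fun d => χ d) n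
  have h_split : lam' n = Λ n +
      ∑ de ∈ n.divisorsAntidiagonal.filter (fun de => 1 < de.2), Λ de.1 * lam de.2 := by
    rw [h_conv, sum_divisorsAntidiagonal_eq_add_sum_one_lt, hlam 1]
    simp
  refine ⟨h_split, ?_, vonMangoldt_nonneg⟩
  rw [h_split]
  exact le_add_of_nonneg_right <|
    sum_nonneg fun de _ => mul_nonneg vonMangoldt_nonneg (hpos de.2)

theorem stmt_9 (q : ℕ) (χ : DirichletCharacter ℝ q) (n : ℕ) (hn : 0 < n)
    (lam lam' : ℕ → ℝ)
    (hlam : ∀ m : ℕ, lam m = ∑ d ∈ m.divisors, χ (d : ZMod q))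
    (hlam' : ∀ m : ℕ, lam' m = ∑ de ∈ m.divisorsAntidiagonal,
      χ ((de.1 : ℕ) : ZMod q) * Real.log de.2)
    (hpos : ∀ m : ℕ, 0 ≤ lam m) :
    lam' n = ArithmeticFunction.vonMangoldt n +
        ∑ de ∈ n.divisorsAntidiagonal.filter (fun de => 1 < de.2),
          ArithmeticFunction.vonMangoldt de.1 * lam de.2 ∧
      ArithmeticFunction.vonMangoldt n ≤ lam' n ∧
      (0 : ℝ) ≤ ArithmeticFunction.vonMangoldt n :=
  stmt_9_general q χ n lam lam' hlam hlam' hpos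
end

section
/- Let b be an integer and d, q positive integers with gcd(d, bq) = 1 (it suffices to assume gcd(d,q)=1). Let f : ℝ → ℂ be a Schwartz function and g : ℤ → ℂ a q-periodic function. Then ∑_{m ≡ b (mod d)} f(m)·g(m) = (1/(dq)) ∑_{h ∈ ℤ} f̂(h/(dq)) ∑_{m mod dq, m ≡ b (mod d)} g(m)·e(hm/(dq)), where f̂ is the Fourier transform and e(x) = exp(2πix). -/
open Real Complex MeasureTheory FourierTransform Finset Function
open scoped SchwartzMap

/-! With `N = d q`, the weight `c m = [d ∣ m - b] g m` is `N`-periodic, so splitting `ℤ` into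
residue classes modulo `N` gives `∑_{r < N} c r ∑_n f (r + N n)`. Poisson summation for the
rescaled function `x ↦ f (N x)` turns each inner sum into `N⁻¹ ∑_h f̂ (h / N) e (h r / N)`, and
exchanging the finite sum over `r` with the sum over `h` gives the right-hand side. -/

namespace SchwartzMap

variable {E : Type*} [NormedAddCommGroup E] [NormedSpace ℝ E]

noncomputable def compMulRight (c : ℝ) (hc : c ≠ 0) (φ : 𝓢(ℝ, E)) : 𝓢(ℝ, E) :=
  compCLMOfContinuousLinearEquiv ℝ (ContinuousLinearEquiv.unitsEquivAut ℝ (Units.mk0 c hc)) φ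

@[simp]
lemma compMulRight_apply (c : ℝ) (hc : c ≠ 0) (φ : 𝓢(ℝ, E)) (x : ℝ) :
    φ.compMulRight c hc x = φ (x * c) :=
  rfl

lemma summable_norm_intCast (φ : 𝓢(ℝ, E)) : Summable fun n : ℤ => ‖φ n‖ := by
  refine summable_of_isBigO (Real.summable_abs_int_rpow one_lt_two) ?_
  simpa [Function.comp_def] using
    ((φ.isBigO_cocompact_rpow (-2)).comp_tendsto Int.tendsto_coe_cofinite).norm_left

lemma summable_norm_intCast_div (φ : 𝓢(ℝ, E)) {T : ℝ} (hT : T ≠ 0) :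
    Summable fun n : ℤ => ‖φ (n / T)‖ := by
  simpa [div_eq_mul_inv] using (φ.compMulRight T⁻¹ (inv_ne_zero hT)).summable_norm_intCast

end SchwartzMap

theorem Real.fourier_comp_mul_right {E : Type*} [NormedAddCommGroup E] [NormedSpace ℂ E]
    (f : ℝ → E) {c : ℝ} (hc : c ≠ 0) (w : ℝ) :
    𝓕 (fun x => f (x * c)) w = |c|⁻¹ • 𝓕 f (w / c) := by
  simp only [Real.fourier_real_eq_integral_exp_smul]
  have h : ∀ x : ℝ, -2 * π * x * w = -2 * π * (x * c) * (w / c) := fun x => by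
    field_simp
  simp_rw [h]
  rw [Measure.integral_comp_mul_right (fun y => cexp (↑(-2 * π * y * (w / c)) * I) • f y), abs_inv]

theorem SchwartzMap.tsum_add_mul_eq_tsum_fourier (φ : 𝓢(ℝ, ℂ)) {T : ℝ} (hT : 0 < T) (x : ℝ) :
    ∑' n : ℤ, φ (x + T * n) =
      T⁻¹ * ∑' h : ℤ, 𝓕 φ (h / T) * cexp (2 * π * I * h * x / T) := by
  set ψ := φ.compMulRight T hT.ne'
  have hψ : ∀ h : ℤ, 𝓕 ψ h = T⁻¹ * 𝓕 φ (h / T) := fun h => by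
    rw [fourier_coe, show (ψ : ℝ → ℂ) = fun x => φ (x * T) from rfl,
      Real.fourier_comp_mul_right _ hT.ne', abs_of_pos hT, Complex.real_smul]
    push_cast; rfl
  calc ∑' n : ℤ, φ (x + T * n) = ∑' n : ℤ, ψ (x / T + n) := by
        refine tsum_congr fun n => ?_
        rw [compMulRight_apply]
        congr 1
        field_simp
    _ = ∑' h : ℤ, 𝓕 ψ h * _root_.fourier h ((x / T : ℝ) : UnitAddCircle) :=
        ψ.tsum_eq_tsum_fourier _
    _ = _ := by
        rw [← tsum_mul_left]
        refine tsum_congr fun h => ?_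
        rw [hψ, fourier_coe_apply]
        push_cast
        ring_nf

theorem Int.tsum_eq_sum_range_tsum_add_mul {E : Type*} [AddCommGroup E] [UniformSpace E]
    [IsUniformAddGroup E] [CompleteSpace E] [T0Space E] {f : ℤ → E} (hf : Summable f)
    (N : ℕ) [NeZero N] :
    ∑' m, f m = ∑ r ∈ Finset.range N, ∑' n : ℤ, f (r + N * n) := by
  let e : ℤ ≃ Fin N × ℤ := (Int.divModEquiv N).trans (Equiv.prodComm _ _)
  have he : ∀ p : Fin N × ℤ, e.symm p = p.1 + N * p.2 := fun p => by
    simp [e, add_comm, mul_comm]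
  rw [← e.symm.tsum_eq, Summable.tsum_prod (f := fun p => f (e.symm p))
    (hf.comp_injective e.symm.injective), tsum_fintype,
    ← Fin.sum_univ_eq_sum_range (fun r => ∑' n : ℤ, f (r + N * n))]
  simp only [he]

theorem Function.Periodic.norm_le_sum_range {E : Type*} [SeminormedAddCommGroup E] {c : ℤ → E}
    {N : ℕ} (hc : Periodic c N) (hN : 0 < N) (m : ℤ) :
    ‖c m‖ ≤ ∑ r ∈ Finset.range N, ‖c r‖ := by
  obtain ⟨y, ⟨hy0, hyN⟩, hy⟩ := hc.exists_mem_Ico₀ (by exact_mod_cast hN) m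
  lift y to ℕ using hy0
  rw [hy]
  exact single_le_sum (f := fun r : ℕ => ‖c r‖) (fun _ _ => norm_nonneg _)
    (mem_range.2 (by exact_mod_cast hyN))

theorem Function.Periodic.ite_dvd_sub {M : Type*} [Zero M] {g : ℤ → M} {q : ℤ}
    (hg : Periodic g q) (d b : ℤ) : Periodic (fun m => if d ∣ m - b then g m else 0) (d * q) := by
  intro m
  have hgdq : g (m + d * q) = g m := by simpa using hg.int_mul d m
  simp only [hgdq, show m + d * q - b = m - b + d * q by ring, dvd_add_left (dvd_mul_right d q)]

theorem SchwartzMap.tsum_mul_periodic_eq (φ : 𝓢(ℝ, ℂ)) {c : ℤ → ℂ} {N : ℕ} (hN : 0 < N)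
    (hc : Periodic c N) :
    ∑' m : ℤ, φ m * c m =
      (1 / N) * ∑' h : ℤ,
        𝓕 φ (h / N) * ∑ r ∈ Finset.range N, c r * cexp (2 * π * I * h * r / N) := by
  have : NeZero N := ⟨hN.ne'⟩
  have hNR : (0 : ℝ) < N := by exact_mod_cast hN
  have hsum : Summable fun m : ℤ => φ m * c m :=
    .of_norm_bounded (φ.summable_norm_intCast.mul_right _) fun m => by
      rw [norm_mul]; gcongr; exact hc.norm_le_sum_range hN m
  have hsum_fourier (r : ℕ) :
      Summable fun h : ℤ => 𝓕 φ (h / N) * (c r * cexp (2 * π * I * h * r / N)) := by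
    refine .of_norm_bounded (((𝓕 φ).summable_norm_intCast_div hNR.ne').mul_right ‖c r‖)
      fun h => ?_
    rw [norm_mul, norm_mul, show 2 * π * I * h * r / N = ((2 * π * h * r / N : ℝ) : ℂ) * I by
      push_cast; ring, norm_exp_ofReal_mul_I, mul_one]
  calc ∑' m : ℤ, φ m * c m
        = ∑ r ∈ Finset.range N, ∑' n : ℤ, φ ((r + N * n : ℤ) : ℝ) * c (r + N * n) :=
        Int.tsum_eq_sum_range_tsum_add_mul hsum N
    _ = ∑ r ∈ Finset.range N, c r * ∑' n : ℤ, φ (r + N * n) := by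
        refine sum_congr rfl fun r _ => ?_
        rw [← tsum_mul_left]
        refine tsum_congr fun n => ?_
        have hper : c (r + n * N) = c r := by simpa using hc.int_mul n r
        rw [mul_comm (N : ℤ), hper, mul_comm]
        push_cast; ring_nf
    _ = ∑ r ∈ Finset.range N,
          c r * ((N : ℝ)⁻¹ * ∑' h : ℤ, 𝓕 φ (h / N) * cexp (2 * π * I * h * r / N)) := by
        refine sum_congr rfl fun r _ => ?_
        rw [φ.tsum_add_mul_eq_tsum_fourier hNR]
        push_cast; rfl
    _ = _ := by
        simp_rw [mul_sum]
        rw [Summable.tsum_finsetSum fun r _ => hsum_fourier r, mul_sum]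
        refine sum_congr rfl fun r _ => ?_
        rw [← tsum_mul_left, ← tsum_mul_left, ← tsum_mul_left]
        refine tsum_congr fun h => ?_
        push_cast; ring

open Real Complex in
theorem stmt_13_general (b : ℤ) (d q : ℕ) (hd : 0 < d) (hq : 0 < q)
    (f : SchwartzMap ℝ ℂ) (g : ℤ → ℂ) (hg : ∀ m : ℤ, g (m + q) = g m) :
    ∑' m : ℤ, (if (d : ℤ) ∣ (m - b) then f (m : ℝ) * g m else 0) =
      (1 / ((d : ℂ) * q)) * ∑' h : ℤ,
        (FourierTransform.fourier (fun x : ℝ => f x) ((h : ℝ) / ((d : ℝ) * q))) *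
          ∑ m ∈ Finset.range (d * q),
            (if (d : ℤ) ∣ ((m : ℤ) - b) then
              g m * Complex.exp (2 * Real.pi * Complex.I * h * m / ((d : ℂ) * q)) else 0) := by
  have hper : Periodic (fun m => if (d : ℤ) ∣ m - b then g m else 0) ((d * q : ℕ) : ℤ) := by
    simpa using Periodic.ite_dvd_sub (q := q) hg d b
  have key := f.tsum_mul_periodic_eq (Nat.mul_pos hd hq) hper
  simp only [mul_ite, mul_zero, ite_mul, zero_mul, Nat.cast_mul, SchwartzMap.fourier_coe] at key
  exact key

open Real Complex in
theorem stmt_13 (b : ℤ) (d q : ℕ) (hd : 0 < d) (hq : 0 < q)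
    (hgcd : Int.gcd (d : ℤ) (b * q) = 1)
    (f : SchwartzMap ℝ ℂ) (g : ℤ → ℂ) (hg : ∀ m : ℤ, g (m + q) = g m) :
    ∑' m : ℤ, (if (d : ℤ) ∣ (m - b) then f (m : ℝ) * g m else 0) =
      (1 / ((d : ℂ) * q)) * ∑' h : ℤ,
        (FourierTransform.fourier (fun x : ℝ => f x) ((h : ℝ) / ((d : ℝ) * q))) *
          ∑ m ∈ Finset.range (d * q),
            (if (d : ℤ) ∣ ((m : ℤ) - b) then
              g m * Complex.exp (2 * Real.pi * Complex.I * h * m / ((d : ℂ) * q)) else 0) :=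
  stmt_13_general b d q hd hq f g hg
end

section
/- Let H ≥ 2 and define the singular series 𝔖_h = 2·∏_{p>2}(1 − 1/(p−1)²)·∏_{p|h, p>2}(1 + 1/(p−2)) for even h and 𝔖_h = 0 for odd h. Then ∑_{0 < |h| ≤ H} (H − |h|)·𝔖_h = H² + O(H log H). -/
/-!
For `h = 2m` the factor `∏_{p ∣ m, p > 2} (1 + 1/(p-2))` of `𝔖_h` equals `∑_{d ∣ m} a(d)`, where
`a` is multiplicative, supported on odd squarefree numbers, with `a(p) = 1/(p-2)`. Exchanging sums,
`∑_{m ≤ H/2} (H - 2m) ∑_{d ∣ m} a(d) = ∑_{d ≤ H/2} a(d) ∑_{k ≤ H/2d} (H - 2dk)`,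
and each inner sum is `H²/(4d) + O(H)`. By the Euler product `∑_d a(d)/d = ∏_{p>2} (1 + 1/(p(p-2)))`,
which is `1/κ` for `κ = ∏_{p>2} (1 - 1/(p-1)²)`, so the main term `4κ · H²/4 · ∑_d a(d)/d` is `H²`.
Both error terms are controlled by the majorant `d a(d) ≤ ∑_{f ∣ d} c(f)` with `c(p) = 2/(p-2)`,
for which `∑ c(f)/f` converges: it gives `∑_{d ≤ H} a(d) = O(log H)` and
`∑_{d > H/2} a(d)/d = O(1/H)`.
-/

open Finset ArithmeticFunction
open scoped ArithmeticFunction.zeta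

theorem sum_Icc_sum_divisors_eq {M : Type*} [AddCommMonoid M] (N : ℕ) (F : ℕ → ℕ → M) :
    ∑ n ∈ Icc 1 N, ∑ d ∈ n.divisors, F d n =
      ∑ d ∈ Icc 1 N, ∑ k ∈ Icc 1 (N / d), F d (d * k) := by
  rw [sum_comm' (t' := Icc 1 N) (s' := fun d => (Icc 1 N).filter (d ∣ ·))]
  · refine sum_congr rfl fun d hd => ?_
    have hd0 : 0 < d := (mem_Icc.1 hd).1
    refine sum_nbij' (· / d) (d * ·) ?_ ?_ ?_ ?_ ?_
    all_goals intro n hn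
    all_goals try simp only [mem_filter, mem_Icc] at hn ⊢
    · obtain ⟨⟨h1, h2⟩, k, rfl⟩ := hn
      rw [Nat.mul_div_cancel_left k hd0]
      exact ⟨Nat.pos_of_mul_pos_left h1, (Nat.le_div_iff_mul_le hd0).2 (by rwa [mul_comm])⟩
    · refine ⟨⟨Nat.mul_pos hd0 hn.1, ?_⟩, dvd_mul_right d n⟩
      rw [mul_comm]
      exact (Nat.le_div_iff_mul_le hd0).1 hn.2
    · exact Nat.mul_div_cancel' hn.2
    · exact Nat.mul_div_cancel_left n hd0
    · rw [Nat.mul_div_cancel' hn.2]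
  · intro n d
    simp only [mem_Icc, mem_filter, Nat.mem_divisors]
    constructor
    · rintro ⟨⟨h1, h2⟩, hdn, -⟩
      exact ⟨⟨⟨h1, h2⟩, hdn⟩, Nat.pos_of_dvd_of_pos hdn h1, (Nat.le_of_dvd h1 hdn).trans h2⟩
    · rintro ⟨⟨⟨h1, h2⟩, hdn⟩, -⟩
      exact ⟨⟨h1, h2⟩, hdn, by omega⟩

theorem sum_Icc_filter_ne_zero_natAbs {M : Type*} [AddCommMonoid M] (N : ℕ) (φ : ℕ → M) :
    ∑ h ∈ (Icc (-(N : ℤ)) N).filter (· ≠ 0), φ h.natAbs = 2 • ∑ n ∈ Icc 1 N, φ n := by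
  rw [← sum_fiberwise_of_maps_to (t := Icc 1 N) (g := Int.natAbs), smul_sum]
  · refine sum_congr rfl fun n hn => ?_
    have hn : 1 ≤ n ∧ n ≤ N := mem_Icc.1 hn
    have hfiber :
        ((Icc (-(N : ℤ)) N).filter (· ≠ 0)).filter (·.natAbs = n) = {(n : ℤ), -(n : ℤ)} := by
      ext h
      simp only [mem_filter, mem_Icc, mem_insert, mem_singleton]
      omega
    rw [sum_congr rfl fun h hh => congrArg φ (mem_filter.1 hh).2, sum_const, hfiber,
      card_pair (by omega)]
  · intro h hh
    simp only [mem_filter, mem_Icc] at hh ⊢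
    omega

theorem sum_Icc_ite_two_dvd {M : Type*} [AddCommMonoid M] (N : ℕ) (φ : ℕ → M) :
    ∑ n ∈ Icc 1 N, (if 2 ∣ n then φ n else 0) = ∑ m ∈ Icc 1 (N / 2), φ (2 * m) := by
  rw [← sum_filter]
  refine sum_nbij' (· / 2) (2 * ·) ?_ ?_ ?_ ?_ ?_
  all_goals intro n hn
  all_goals try simp only [mem_filter, mem_Icc] at hn ⊢
  all_goals first | omega | congr 1; omega

noncomputable def sqfreeMult (w : ℕ → ℝ) : ArithmeticFunction ℝ :=
  ⟨fun n => if Squarefree n then ∏ p ∈ n.primeFactors, w p else 0, by simp⟩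

namespace sqfreeMult

variable {w : ℕ → ℝ}

theorem apply (w : ℕ → ℝ) (n : ℕ) :
    sqfreeMult w n = if Squarefree n then ∏ p ∈ n.primeFactors, w p else 0 := rfl

theorem apply_prime {p : ℕ} (hp : p.Prime) : sqfreeMult w p = w p := by
  rw [apply, if_pos hp.prime.squarefree, hp.primeFactors, prod_singleton]

theorem apply_prime_pow {p k : ℕ} (hp : p.Prime) (hk : 2 ≤ k) : sqfreeMult w (p ^ k) = 0 := by
  rw [apply, if_neg]
  rw [Nat.squarefree_pow_iff hp.ne_one (by omega)]
  omega

theorem isMultiplicative (w : ℕ → ℝ) : (sqfreeMult w).IsMultiplicative := by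
  rw [IsMultiplicative.iff_ne_zero]
  refine ⟨by simp [apply], fun {m n} hm hn hmn => ?_⟩
  simp only [apply, Nat.squarefree_mul hmn, ite_zero_mul_ite_zero,
    Nat.primeFactors_mul hm hn, prod_union hmn.disjoint_primeFactors]

theorem nonneg (hw : ∀ p, p.Prime → 0 ≤ w p) (n : ℕ) : 0 ≤ sqfreeMult w n := by
  rw [apply]
  split_ifs
  · exact prod_nonneg fun p hp => hw p (Nat.prime_of_mem_primeFactors hp)
  · exact le_rfl

theorem apply_div_natCast (w : ℕ → ℝ) (n : ℕ) :
    sqfreeMult w n / n = sqfreeMult (fun p => w p / p) n := by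
  rw [apply, apply]
  split_ifs with hn
  · have hn' : (n : ℝ) = ∏ p ∈ n.primeFactors, (p : ℝ) := by
      rw [← Nat.cast_prod, Nat.prod_primeFactors_of_squarefree hn]
    rw [hn', prod_div_distrib]
  · exact zero_div _

theorem sum_divisors {n : ℕ} (hn : n ≠ 0) :
    ∑ d ∈ n.divisors, sqfreeMult w d = ∏ p ∈ n.primeFactors, (1 + w p) := by
  have key : sqfreeMult w * ζ = prodPrimeFactors fun p => 1 + w p := by
    refine (IsMultiplicative.eq_iff_eq_on_prime_powers _
      ((isMultiplicative w).mul isMultiplicative_zeta.natCast) _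
      (IsMultiplicative.prodPrimeFactors _)).2 fun p k hp => ?_
    rw [coe_mul_zeta_apply, Nat.sum_divisors_prime_pow hp,
      prodPrimeFactors_apply (pow_ne_zero k hp.ne_zero)]
    rcases k with _ | k
    · simp [apply]
    · rw [Nat.primeFactors_prime_pow k.succ_ne_zero hp, prod_singleton, sum_range_succ',
        sum_range_succ', sum_eq_zero fun i _ => apply_prime_pow hp (by omega)]
      simp [apply_prime hp, (isMultiplicative w).map_one, add_comm]
  simpa only [coe_mul_zeta_apply, prodPrimeFactors_apply hn] using DFunLike.congr_fun key n

theorem sum_le_exp {C : ℝ} (hw0 : ∀ p, p.Prime → 0 ≤ w p)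
    (hw : ∀ p, p.Prime → w p ≤ C / p ^ 2) (s : Finset ℕ) :
    ∑ n ∈ s, sqfreeMult w n ≤ Real.exp C := by
  set L := ∏ n ∈ s.filter (· ≠ 0), n
  have hL : L ≠ 0 := prod_ne_zero_iff.2 fun n hn => (mem_filter.1 hn).2
  have hC : 0 ≤ C := by
    have := (hw0 2 Nat.prime_two).trans (hw 2 Nat.prime_two)
    nlinarith
  have hinvsq : ∑ p ∈ L.primeFactors, ((p : ℝ) ^ 2)⁻¹ ≤ 1 :=
    calc ∑ p ∈ L.primeFactors, ((p : ℝ) ^ 2)⁻¹ ≤ ∑ i ∈ Ioo 1 (L + 1), ((i : ℝ) ^ 2)⁻¹ := by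
          refine sum_le_sum_of_subset_of_nonneg (fun p hp => ?_) fun _ _ _ => by positivity
          have := Nat.le_of_mem_primeFactors hp
          have := (Nat.prime_of_mem_primeFactors hp).one_lt
          exact mem_Ioo.2 ⟨by omega, by omega⟩
      _ ≤ 1 := (sum_Ioo_inv_sq_le 1 (L + 1)).trans_eq (by norm_num)
  calc ∑ n ∈ s, sqfreeMult w n = ∑ n ∈ s.filter (· ≠ 0), sqfreeMult w n := by
        refine (sum_filter_of_ne fun n _ h => ?_).symm
        rintro rfl
        exact h ArithmeticFunction.map_zero
    _ ≤ ∑ d ∈ L.divisors, sqfreeMult w d := by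
        refine sum_le_sum_of_subset_of_nonneg (fun n hn => ?_) fun n _ _ => nonneg hw0 n
        exact Nat.mem_divisors.2 ⟨dvd_prod_of_mem _ hn, hL⟩
    _ = ∏ p ∈ L.primeFactors, (1 + w p) := sum_divisors hL
    _ ≤ ∏ p ∈ L.primeFactors, Real.exp (w p) := by
        refine prod_le_prod (fun p hp => ?_) fun p _ => ?_
        · linarith [hw0 p (Nat.prime_of_mem_primeFactors hp)]
        · linarith [Real.add_one_le_exp (w p)]
    _ = Real.exp (∑ p ∈ L.primeFactors, w p) := (Real.exp_sum _ _).symm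
    _ ≤ Real.exp C := by
        gcongr
        calc ∑ p ∈ L.primeFactors, w p ≤ ∑ p ∈ L.primeFactors, C * ((p : ℝ) ^ 2)⁻¹ :=
              sum_le_sum fun p hp => (hw p (Nat.prime_of_mem_primeFactors hp)).trans_eq
                (div_eq_mul_inv _ _)
          _ ≤ C := by rw [← mul_sum]; nlinarith

theorem summable {C : ℝ} (hw0 : ∀ p, p.Prime → 0 ≤ w p)
    (hw : ∀ p, p.Prime → w p ≤ C / p ^ 2) : Summable (sqfreeMult w) :=
  summable_of_sum_le (nonneg hw0) (sum_le_exp hw0 hw)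

theorem tsum_prime_pow {p : ℕ} (hp : p.Prime) : ∑' e, sqfreeMult w (p ^ e) = 1 + w p := by
  rw [tsum_eq_sum (s := range 2) fun e he => apply_prime_pow hp (by simp at he; omega)]
  simp [sum_range_succ, apply_prime hp, (isMultiplicative w).map_one]

end sqfreeMult

theorem div_sub_two_nonneg {c : ℝ} (hc : 0 ≤ c) {p : ℕ} (hp : 2 ≤ p) : 0 ≤ c / ((p : ℝ) - 2) :=
  div_nonneg hc (sub_nonneg.2 (by exact_mod_cast hp))

theorem div_sub_two_div_le {c : ℝ} (hc : 0 ≤ c) {p : ℕ} (hp : 2 ≤ p) :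
    c / ((p : ℝ) - 2) / p ≤ 3 * c / (p : ℝ) ^ 2 := by
  rcases hp.eq_or_lt with rfl | hp
  · norm_num
    positivity
  have hp : (3 : ℝ) ≤ p := by exact_mod_cast hp
  rw [div_div, div_le_div_iff₀ (by nlinarith) (by positivity)]
  nlinarith [mul_nonneg (mul_nonneg hc (by linarith : (0 : ℝ) ≤ p))
    (by linarith : (0 : ℝ) ≤ 2 * p - 6)]

-- The weights are `c / 0 = 0` at `p = 2`, so both functions vanish on even numbers.
noncomputable def twinCoeff : ArithmeticFunction ℝ := sqfreeMult fun p => 1 / ((p : ℝ) - 2)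

noncomputable def twinMajorant : ArithmeticFunction ℝ := sqfreeMult fun p => 2 / ((p : ℝ) - 2)

theorem twinCoeff_nonneg (n : ℕ) : 0 ≤ twinCoeff n :=
  sqfreeMult.nonneg (fun _ hp => div_sub_two_nonneg zero_le_one hp.two_le) n

theorem twinMajorant_nonneg (n : ℕ) : 0 ≤ twinMajorant n :=
  sqfreeMult.nonneg (fun _ hp => div_sub_two_nonneg zero_le_two hp.two_le) n

theorem twinCoeff_div_eq (n : ℕ) :
    twinCoeff n / n = sqfreeMult (fun p => 1 / ((p : ℝ) - 2) / p) n :=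
  sqfreeMult.apply_div_natCast _ n

theorem summable_twinCoeff_div : Summable fun n => twinCoeff n / n := by
  simp_rw [twinCoeff_div_eq]
  exact sqfreeMult.summable (C := 3)
    (fun p hp => div_nonneg (div_sub_two_nonneg zero_le_one hp.two_le) (Nat.cast_nonneg p))
    fun p hp => (div_sub_two_div_le zero_le_one hp.two_le).trans_eq (by ring)

theorem sum_twinMajorant_div_le (s : Finset ℕ) : ∑ n ∈ s, twinMajorant n / n ≤ Real.exp 6 := by
  simp_rw [twinMajorant, sqfreeMult.apply_div_natCast]
  exact sqfreeMult.sum_le_exp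
    (fun p hp => div_nonneg (div_sub_two_nonneg zero_le_two hp.two_le) (Nat.cast_nonneg p))
    (fun p hp => (div_sub_two_div_le zero_le_two hp.two_le).trans_eq (by ring)) s

-- For squarefree `n`, `n * twinCoeff n = ∏ p / (p - 2)`, and `p / (p - 2) = 1 + 2 / (p - 2)`.
theorem natCast_mul_twinCoeff_le (n : ℕ) :
    n * twinCoeff n ≤ ∑ d ∈ n.divisors, twinMajorant d := by
  rcases eq_or_ne n 0 with rfl | hn
  · simp
  rw [twinMajorant, sqfreeMult.sum_divisors hn, twinCoeff, sqfreeMult.apply]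
  split_ifs with hsq
  · nth_rw 1 [← Nat.prod_primeFactors_of_squarefree hsq]
    rw [Nat.cast_prod, ← prod_mul_distrib]
    refine prod_le_prod (fun p hp => ?_) fun p hp => ?_
    · exact mul_nonneg (Nat.cast_nonneg p)
        (div_sub_two_nonneg zero_le_one (Nat.prime_of_mem_primeFactors hp).two_le)
    · rcases (Nat.prime_of_mem_primeFactors hp).two_le.eq_or_lt with rfl | hp3
      · norm_num
      · have : (0 : ℝ) < p - 2 := sub_pos.2 (by exact_mod_cast hp3)
        refine le_of_eq ?_
        field_simp
        ring
  · rw [mul_zero]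
    exact prod_nonneg fun p hp => add_nonneg zero_le_one
      (div_sub_two_nonneg zero_le_two (Nat.prime_of_mem_primeFactors hp).two_le)

theorem sum_Icc_twinCoeff_le {M N : ℕ} (hMN : M ≤ N) :
    ∑ d ∈ Icc 1 M, twinCoeff d ≤ Real.exp 6 * (1 + Real.log N) := by
  have hharm : ∀ n ≤ N, ∑ k ∈ Icc 1 n, (k : ℝ)⁻¹ ≤ 1 + Real.log N := fun n hn =>
    calc ∑ k ∈ Icc 1 n, (k : ℝ)⁻¹ ≤ ∑ k ∈ Icc 1 N, (k : ℝ)⁻¹ :=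
          sum_le_sum_of_subset_of_nonneg (Icc_subset_Icc_right hn) fun _ _ _ => by positivity
      _ ≤ 1 + Real.log N := by
          simpa [harmonic_eq_sum_Icc] using harmonic_le_one_add_log N
  calc ∑ d ∈ Icc 1 M, twinCoeff d
      ≤ ∑ d ∈ Icc 1 M, ∑ f ∈ d.divisors, twinMajorant f / d := by
        refine sum_le_sum fun d hd => ?_
        have hd : (0 : ℝ) < d := by exact_mod_cast (mem_Icc.1 hd).1
        rw [← sum_div, le_div_iff₀ hd, mul_comm]
        exact natCast_mul_twinCoeff_le d
    _ = ∑ f ∈ Icc 1 M, twinMajorant f / f * ∑ k ∈ Icc 1 (M / f), (k : ℝ)⁻¹ := by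
        rw [sum_Icc_sum_divisors_eq]
        refine sum_congr rfl fun f _ => ?_
        rw [mul_sum]
        refine sum_congr rfl fun k _ => ?_
        rw [Nat.cast_mul, div_mul_eq_div_div, div_eq_mul_inv]
    _ ≤ ∑ f ∈ Icc 1 M, twinMajorant f / f * (1 + Real.log N) :=
        sum_le_sum fun f _ => mul_le_mul_of_nonneg_left
          (hharm _ ((Nat.div_le_self M f).trans hMN))
          (div_nonneg (twinMajorant_nonneg f) (Nat.cast_nonneg f))
    _ ≤ Real.exp 6 * (1 + Real.log N) := by
        rw [← sum_mul]
        exact mul_le_mul_of_nonneg_right (sum_twinMajorant_div_le _)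
          (by linarith [Real.log_natCast_nonneg N])

theorem sum_inv_sq_filter_lt_mul_le (M : ℕ) {f : ℕ} (hf : 0 < f) (s : Finset ℕ) :
    ∑ k ∈ s with M < f * k, ((k : ℝ) ^ 2)⁻¹ ≤ 2 * f / (M + 1) :=
  calc ∑ k ∈ s with M < f * k, ((k : ℝ) ^ 2)⁻¹
      ≤ ∑ k ∈ Ioo (M / f) (s.sup id + 1), ((k : ℝ) ^ 2)⁻¹ := by
        refine sum_le_sum_of_subset_of_nonneg (fun k hk => ?_) fun _ _ _ => by positivity
        obtain ⟨hks, hMk⟩ := mem_filter.1 hk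
        exact mem_Ioo.2 ⟨Nat.div_lt_of_lt_mul hMk, Nat.lt_succ_of_le (le_sup (f := id) hks)⟩
    _ ≤ 2 / ((M / f : ℕ) + 1) := sum_Ioo_inv_sq_le _ _
    _ ≤ 2 * f / (M + 1) := by
        have h : (M : ℝ) + 1 ≤ f * ((M / f : ℕ) + 1) := by
          exact_mod_cast Nat.lt_mul_div_succ M hf
        rw [div_le_div_iff₀ (by positivity) (by positivity)]
        nlinarith

theorem sum_twinCoeff_div_le_of_forall_lt {M : ℕ} {s : Finset ℕ} (hs : ∀ d ∈ s, M < d) :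
    ∑ d ∈ s, twinCoeff d / d ≤ 2 * Real.exp 6 / (M + 1) := by
  set K := s.sup id
  calc ∑ d ∈ s, twinCoeff d / d ≤ ∑ d ∈ Icc 1 K with M < d, twinCoeff d / d := by
        refine sum_le_sum_of_subset_of_nonneg (fun d hd => ?_) fun d _ _ =>
          div_nonneg (twinCoeff_nonneg d) (Nat.cast_nonneg d)
        exact mem_filter.2 ⟨mem_Icc.2 ⟨by linarith [hs d hd], le_sup (f := id) hd⟩, hs d hd⟩
    _ ≤ ∑ d ∈ Icc 1 K, ∑ f ∈ d.divisors,
          if M < d then twinMajorant f / (d : ℝ) ^ 2 else 0 := by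
        rw [sum_filter]
        refine sum_le_sum fun d hd => ?_
        split_ifs
        · have hd : (0 : ℝ) < d := by exact_mod_cast (mem_Icc.1 hd).1
          rw [← sum_div, div_le_div_iff₀ hd (by positivity), sq, ← mul_assoc,
            mul_comm _ (d : ℝ), ← mul_assoc]
          exact mul_le_mul_of_nonneg_right (natCast_mul_twinCoeff_le d) hd.le
        · simp
    _ = ∑ f ∈ Icc 1 K, twinMajorant f / f ^ 2 *
          ∑ k ∈ Icc 1 (K / f) with M < f * k, ((k : ℝ) ^ 2)⁻¹ := by
        rw [sum_Icc_sum_divisors_eq]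
        refine sum_congr rfl fun f _ => ?_
        rw [sum_filter, mul_sum]
        refine sum_congr rfl fun k _ => ?_
        split_ifs
        · rw [Nat.cast_mul, mul_pow, div_mul_eq_div_div, div_eq_mul_inv]
        · rw [mul_zero]
    _ ≤ ∑ f ∈ Icc 1 K, twinMajorant f / f ^ 2 * (2 * f / (M + 1)) :=
        sum_le_sum fun f hf => mul_le_mul_of_nonneg_left
          (sum_inv_sq_filter_lt_mul_le M (mem_Icc.1 hf).1 _)
          (div_nonneg (twinMajorant_nonneg f) (by positivity))
    _ = (∑ f ∈ Icc 1 K, twinMajorant f / f) * (2 / (M + 1)) := by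
        rw [sum_mul]
        refine sum_congr rfl fun f hf => ?_
        have : (f : ℝ) ≠ 0 := by exact_mod_cast (Nat.one_le_iff_ne_zero.1 (mem_Icc.1 hf).1)
        field_simp
    _ ≤ 2 * Real.exp 6 / (M + 1) := by
        rw [mul_div_assoc', mul_comm 2]
        gcongr
        exact sum_twinMajorant_div_le _

theorem tsum_twinCoeff_div_sub_sum_le (M : ℕ) :
    ∑' n, twinCoeff n / n - ∑ d ∈ Icc 1 M, twinCoeff d / d ≤ 2 * Real.exp 6 / (M + 1) := by
  have hsplit := summable_twinCoeff_div.sum_add_tsum_nat_add (M + 1)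
  have hhead : ∑ n ∈ range (M + 1), twinCoeff n / n = ∑ d ∈ Icc 1 M, twinCoeff d / d := by
    rw [range_eq_Ico, sum_eq_sum_Ico_succ_bot (Nat.succ_pos M)]
    simp only [Nat.cast_zero, div_zero, zero_add, Nat.succ_eq_add_one, Ico_add_one_right_eq_Icc]
  have htail : ∑' i, twinCoeff (i + (M + 1)) / ↑(i + (M + 1)) ≤ 2 * Real.exp 6 / (M + 1) := by
    refine Real.tsum_le_of_sum_range_le
      (fun i => div_nonneg (twinCoeff_nonneg _) (Nat.cast_nonneg _)) fun N => ?_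
    have := sum_map (range N) (addRightEmbedding (M + 1)) fun d => twinCoeff d / d
    simp only [addRightEmbedding_apply] at this
    rw [← this]
    exact sum_twinCoeff_div_le_of_forall_lt fun d hd => by
      obtain ⟨i, -, rfl⟩ := mem_map.1 hd
      simp only [addRightEmbedding_apply]
      omega
  linarith

theorem one_le_tsum_twinCoeff_div : 1 ≤ ∑' n, twinCoeff n / n := by
  have h := summable_twinCoeff_div.le_tsum 1 fun n _ =>
    div_nonneg (twinCoeff_nonneg n) (Nat.cast_nonneg n)
  have h1 : twinCoeff 1 = 1 := (sqfreeMult.isMultiplicative _).map_one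
  rwa [h1, Nat.cast_one, div_one] at h

theorem hasProd_one_sub_inv_sq :
    HasProd (fun p : {p : ℕ // p.Prime ∧ 2 < p} => 1 - 1 / ((p.1 : ℝ) - 1) ^ 2)
      (∑' n, twinCoeff n / n)⁻¹ := by
  set F := sqfreeMult fun p => 1 / ((p : ℝ) - 2) / p
  have hF : F.IsMultiplicative := sqfreeMult.isMultiplicative _
  have hFeq : (fun n => twinCoeff n / n) = F := funext twinCoeff_div_eq
  have hnorm : Summable (‖F ·‖) := by
    refine (summable_twinCoeff_div.congr fun n => ?_).abs
    rw [twinCoeff_div_eq]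
  have h := EulerProduct.eulerProduct_hasProd_mulIndicator hF.map_one
    (fun hmn => hF.map_mul_of_coprime hmn) hnorm ArithmeticFunction.map_zero
  have heq : {p | p.Prime}.mulIndicator (fun p => ∑' e, F (p ^ e)) =
      {p | p.Prime}.mulIndicator fun p : ℕ => 1 + 1 / ((p : ℝ) - 2) / p :=
    Set.mulIndicator_congr fun p hp => sqfreeMult.tsum_prime_pow hp
  rw [heq, ← hasProd_subtype_iff_of_mulSupport_subset (s := {p | p.Prime ∧ 2 < p})] at h
  · rw [hFeq]
    refine (h.inv₀ ?_).congr_fun fun ⟨p, hp, hp2⟩ => ?_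
    · rw [← hFeq]
      exact (zero_lt_one.trans_le one_le_tsum_twinCoeff_div).ne'
    · have hp3 : (3 : ℝ) ≤ p := by exact_mod_cast hp2
      have h1 : (p : ℝ) - 1 ≠ 0 := by linarith
      have h2 : (p : ℝ) - 2 ≠ 0 := by linarith
      rw [Function.comp_apply, Set.mulIndicator_of_mem (show p ∈ {p | p.Prime} from hp)]
      refine eq_inv_of_mul_eq_one_left ?_
      field_simp
      ring
  · intro p hp
    rw [Function.mem_mulSupport] at hp
    by_cases hprime : p.Prime
    · refine ⟨hprime, hprime.two_le.lt_of_ne ?_⟩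
      rintro rfl
      norm_num at hp
    · exact absurd (Set.mulIndicator_of_notMem hprime _) hp

theorem sum_Icc_sub_two_mul_eq (H d q : ℕ) :
    ∑ k ∈ Icc 1 q, ((H : ℝ) - 2 * (d * k : ℕ)) = q * H - d * q * (q + 1) := by
  induction q with
  | zero => simp
  | succ q ih =>
    rw [sum_Icc_succ_top (by omega), ih]
    push_cast
    ring

theorem abs_sum_Icc_sub_two_mul_sub_le (H : ℕ) {d : ℕ} (hd : 0 < d) :
    |∑ k ∈ Icc 1 (H / 2 / d), ((H : ℝ) - 2 * (d * k : ℕ)) - (H : ℝ) ^ 2 / (4 * d)| ≤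
      (H : ℝ) / 2 := by
  rw [sum_Icc_sub_two_mul_eq]
  have hlow : 2 * (d * (H / 2 / d)) ≤ H := by
    have := Nat.mul_div_le (H / 2) d
    omega
  have hhigh : H < 2 * (d * (H / 2 / d)) + 2 * d := by
    have := Nat.lt_mul_div_succ (H / 2) hd
    rw [mul_add, mul_one] at this
    omega
  set q := H / 2 / d
  have hd : (0 : ℝ) < d := by exact_mod_cast hd
  set r : ℝ := H - 2 * d * q
  have hr0 : 0 ≤ r := by
    simp only [r]
    rw [sub_nonneg]
    exact_mod_cast (by linarith : 2 * d * q ≤ H)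
  have hr1 : r ≤ 2 * d := by
    have : (H : ℝ) < 2 * (d * q) + 2 * d := by exact_mod_cast hhigh
    simp only [r]
    linarith
  have hdiff : H ^ 2 / (4 * d) - (q * H - d * q * (q + 1)) = r ^ 2 / (4 * d) + d * q := by
    simp only [r]
    field_simp
    ring
  have hrsq : r ^ 2 / (4 * d) ≤ r / 2 := by
    rw [div_le_iff₀ (by positivity)]
    nlinarith
  have hdq : (0 : ℝ) ≤ d * q := by positivity
  have hr2 : 0 ≤ r ^ 2 / (4 * d) := by positivity
  rw [abs_le]
  constructor <;> linarith

noncomputable def twinConstant : ℝ :=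
  ∏' p : {p : ℕ // p.Prime ∧ 2 < p}, (1 - 1 / ((p.1 : ℝ) - 1) ^ 2)

noncomputable def twinSingularSeries (h : ℤ) : ℝ :=
  if 2 ∣ h then
    2 * twinConstant *
      ∏ p ∈ h.natAbs.primeFactors.filter (fun p => 2 < p), (1 + 1 / ((p : ℝ) - 2))
  else 0

theorem twinConstant_eq : twinConstant = (∑' n, twinCoeff n / n)⁻¹ :=
  hasProd_one_sub_inv_sq.tprod_eq

theorem prod_primeFactors_two_mul_eq_sum_divisors {m : ℕ} (hm : m ≠ 0) :
    ∏ p ∈ (2 * m).primeFactors.filter (fun p => 2 < p), (1 + 1 / ((p : ℝ) - 2)) =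
      ∑ d ∈ m.divisors, twinCoeff d := by
  rw [Nat.primeFactors_mul two_ne_zero hm, Nat.prime_two.primeFactors, filter_union,
    filter_singleton, if_neg (lt_irrefl 2), empty_union, prod_filter_of_ne, twinCoeff,
    sqfreeMult.sum_divisors hm]
  intro p hp hp1
  refine (Nat.prime_of_mem_primeFactors hp).two_le.lt_of_ne ?_
  rintro rfl
  norm_num at hp1

theorem sum_twinSingularSeries_eq (H : ℕ) :
    ∑ h ∈ (Icc (-(H : ℤ)) H).filter (fun h => h ≠ 0),
        ((H : ℝ) - |(h : ℝ)|) * twinSingularSeries h =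
      4 * twinConstant * ∑ d ∈ Icc 1 (H / 2), twinCoeff d *
        ∑ k ∈ Icc 1 (H / 2 / d), ((H : ℝ) - 2 * (d * k : ℕ)) := by
  set φ : ℕ → ℝ := fun n => if 2 ∣ n then ((H : ℝ) - n) * (2 * twinConstant *
    ∏ p ∈ n.primeFactors.filter (fun p => 2 < p), (1 + 1 / ((p : ℝ) - 2))) else 0 with hφ
  have hnatAbs (h : ℤ) : ((H : ℝ) - |(h : ℝ)|) * twinSingularSeries h = φ h.natAbs := by
    simp only [hφ, twinSingularSeries]
    rw [Nat.cast_natAbs, Int.cast_abs, mul_ite, mul_zero]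
    exact if_congr Int.ofNat_dvd_left rfl rfl
  rw [sum_congr rfl fun h _ => hnatAbs h, sum_Icc_filter_ne_zero_natAbs H φ, hφ,
    sum_Icc_ite_two_dvd, nsmul_eq_mul, Nat.cast_ofNat, mul_sum, mul_sum]
  calc ∑ m ∈ Icc 1 (H / 2), 2 * (((H : ℝ) - (2 * m : ℕ)) * (2 * twinConstant *
        ∏ p ∈ (2 * m).primeFactors.filter (fun p => 2 < p), (1 + 1 / ((p : ℝ) - 2))))
      = ∑ m ∈ Icc 1 (H / 2), ∑ d ∈ m.divisors,
          4 * twinConstant * (twinCoeff d * ((H : ℝ) - 2 * m)) := by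
        refine sum_congr rfl fun m hm => ?_
        rw [prod_primeFactors_two_mul_eq_sum_divisors (by have := (mem_Icc.1 hm).1; omega),
          mul_sum, mul_sum, mul_sum]
        refine sum_congr rfl fun d _ => ?_
        push_cast
        ring
    _ = _ := by
        rw [sum_Icc_sum_divisors_eq]
        refine sum_congr rfl fun d _ => ?_
        rw [mul_sum, mul_sum]

theorem sum_twinSingularSeries_sub_sq_eq (H : ℕ) :
    ∑ h ∈ (Icc (-(H : ℤ)) H).filter (fun h => h ≠ 0),
        ((H : ℝ) - |(h : ℝ)|) * twinSingularSeries h - (H : ℝ) ^ 2 =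
      4 * twinConstant * ∑ d ∈ Icc 1 (H / 2), twinCoeff d *
          (∑ k ∈ Icc 1 (H / 2 / d), ((H : ℝ) - 2 * (d * k : ℕ)) - (H : ℝ) ^ 2 / (4 * d)) -
        twinConstant * (H : ℝ) ^ 2 *
          (∑' n, twinCoeff n / n - ∑ d ∈ Icc 1 (H / 2), twinCoeff d / d) := by
  have hκT : twinConstant * ∑' n, twinCoeff n / n = 1 := by
    rw [twinConstant_eq]
    exact inv_mul_cancel₀ (zero_lt_one.trans_le one_le_tsum_twinCoeff_div).ne'
  have hsplit : ∑ d ∈ Icc 1 (H / 2), twinCoeff d *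
      (∑ k ∈ Icc 1 (H / 2 / d), ((H : ℝ) - 2 * (d * k : ℕ)) - (H : ℝ) ^ 2 / (4 * d)) =
      ∑ d ∈ Icc 1 (H / 2), twinCoeff d * ∑ k ∈ Icc 1 (H / 2 / d), ((H : ℝ) - 2 * (d * k : ℕ)) -
        (H : ℝ) ^ 2 / 4 * ∑ d ∈ Icc 1 (H / 2), twinCoeff d / d := by
    rw [mul_sum, ← sum_sub_distrib]
    exact sum_congr rfl fun d _ => by ring
  rw [sum_twinSingularSeries_eq, hsplit]
  linear_combination (H : ℝ) ^ 2 * hκT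

theorem abs_sum_twinSingularSeries_sub_sq_le (H : ℕ) :
    |∑ h ∈ (Icc (-(H : ℤ)) H).filter (fun h => h ≠ 0),
        ((H : ℝ) - |(h : ℝ)|) * twinSingularSeries h - (H : ℝ) ^ 2| ≤
      2 * Real.exp 6 * H * (3 + Real.log H) := by
  set M := H / 2
  set T := ∑' n, twinCoeff n / n
  set E : ℕ → ℝ := fun d => ∑ k ∈ Icc 1 (M / d), ((H : ℝ) - 2 * (d * k : ℕ))
  have hT : 1 ≤ T := one_le_tsum_twinCoeff_div
  have hκ0 : 0 ≤ twinConstant := by rw [twinConstant_eq]; positivity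
  have hκ1 : twinConstant ≤ 1 := by rw [twinConstant_eq]; exact inv_le_one_of_one_le₀ hT
  have hmain : |∑ d ∈ Icc 1 M, twinCoeff d * (E d - (H : ℝ) ^ 2 / (4 * d))| ≤
      H / 2 * ∑ d ∈ Icc 1 M, twinCoeff d := by
    rw [mul_sum]
    refine (abs_sum_le_sum_abs _ _).trans (sum_le_sum fun d hd => ?_)
    rw [abs_mul, abs_of_nonneg (twinCoeff_nonneg d), mul_comm]
    exact mul_le_mul_of_nonneg_right (abs_sum_Icc_sub_two_mul_sub_le H (mem_Icc.1 hd).1)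
      (twinCoeff_nonneg d)
  have htail : 0 ≤ T - ∑ d ∈ Icc 1 M, twinCoeff d / d :=
    sub_nonneg.2 (summable_twinCoeff_div.sum_le_tsum _ fun n _ =>
      div_nonneg (twinCoeff_nonneg n) (Nat.cast_nonneg n))
  have hA : ∑ d ∈ Icc 1 M, twinCoeff d ≤ Real.exp 6 * (1 + Real.log H) :=
    sum_Icc_twinCoeff_le (Nat.div_le_self H 2)
  have hHM : (H : ℝ) ^ 2 * (2 * Real.exp 6 / (M + 1)) ≤ 4 * Real.exp 6 * H := by
    have : (H : ℝ) ≤ 2 * (M + 1) := by exact_mod_cast (by omega : H ≤ 2 * (M + 1))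
    rw [mul_div_assoc', div_le_iff₀ (by positivity)]
    nlinarith [mul_le_mul_of_nonneg_left this (by positivity : (0 : ℝ) ≤ 2 * Real.exp 6 * H)]
  rw [sum_twinSingularSeries_sub_sq_eq]
  calc _ ≤ 4 * twinConstant * |∑ d ∈ Icc 1 M, twinCoeff d * (E d - (H : ℝ) ^ 2 / (4 * d))| +
        twinConstant * (H : ℝ) ^ 2 * (T - ∑ d ∈ Icc 1 M, twinCoeff d / d) := by
        refine (abs_sub _ _).trans_eq ?_
        rw [abs_mul, abs_of_nonneg (by positivity : (0 : ℝ) ≤ 4 * twinConstant),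
          abs_of_nonneg (mul_nonneg (by positivity) htail)]
    _ ≤ 4 * 1 * (H / 2 * (Real.exp 6 * (1 + Real.log H))) +
        1 * (H : ℝ) ^ 2 * (2 * Real.exp 6 / (M + 1)) := by
        gcongr
        · exact hmain.trans (by gcongr)
        · exact tsum_twinCoeff_div_sub_sum_le M
    _ ≤ 2 * Real.exp 6 * H * (3 + Real.log H) := by nlinarith

theorem stmt_17 : ∃ C : ℝ, 0 < C ∧ ∀ H : ℕ, 2 ≤ H →
    |(∑ h ∈ (Finset.Icc (-(H : ℤ)) (H : ℤ)).filter (fun h => h ≠ 0),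
        ((H : ℝ) - |(h : ℝ)|) *
          (if 2 ∣ h then
            2 * (∏' p : {p : ℕ // p.Prime ∧ 2 < p}, (1 - 1 / ((p.1 : ℝ) - 1) ^ 2)) *
              ∏ p ∈ h.natAbs.primeFactors.filter (fun p => 2 < p), (1 + 1 / ((p : ℝ) - 2))
          else 0)) - (H : ℝ) ^ 2| ≤
    C * H * Real.log H := by
  refine ⟨14 * Real.exp 6, by positivity, fun H hH => ?_⟩
  have hlog : 1 / 2 ≤ Real.log H :=
    calc (1 : ℝ) / 2 ≤ Real.log 2 := by linarith [Real.log_two_gt_d9]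
      _ ≤ Real.log H := Real.log_le_log two_pos (by exact_mod_cast hH)
  have hexpH : 0 ≤ Real.exp 6 * H := by positivity
  calc _ ≤ 2 * Real.exp 6 * H * (3 + Real.log H) := abs_sum_twinSingularSeries_sub_sq_le H
    _ ≤ 14 * Real.exp 6 * H * Real.log H := by nlinarith
end

section
/- For all integers a, b and positive integer c, the Kloosterman sum S(a,b;c) = ∑_{n mod c, gcd(n,c)=1} e((an + b·n̄)/c) satisfies |S(a,b;c)| ≪_ε c^{3/4+ε}·gcd(a,b,c)^{1/4} for every ε > 0, where n̄ is the inverse of n modulo c. -/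
/-!
Kloosterman's fourth-moment argument. By orthogonality of additive characters,
`∑_{α,β} |S(α,β;c)|⁴` is `c²` times the number of unit solutions of `x₁ + x₂ = y₁ + y₂`,
`x̄₁ + x̄₂ = ȳ₁ + ȳ₂`. Such a solution forces `(x₁ + x₂)(y₁ - x₁)(y₁ - x₂) ≡ 0 (mod c)`, and the
congruence `s·X·Y ≡ 0` has at most `(∑_x gcd(x, c))² ≤ (c·τ(c))²` solutions, so the moment is
`≤ 2c⁴τ(c)²`. On the other hand `S(αt, βt̄) = S(α, β)` for every unit `t`, and `t ↦ (at, bt̄)`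
is at most `gcd(a, b, c)`-to-one, so `φ(c)|S(a,b;c)|⁴ ≤ gcd(a, b, c)·2c⁴τ(c)²`. With
`c ≤ φ(c)τ(c)` and the divisor bound `τ(c) ≪_δ c^δ` this gives the exponent `3/4 + ε`.
-/

open Finset

theorem Finset.sum_comp_le_nsmul_sum {ι κ M : Type*} [Fintype ι] [Fintype κ] [DecidableEq κ]
    [AddCommMonoid M] [PartialOrder M] [IsOrderedAddMonoid M] (F : ι → κ) {m : ℕ}
    (hF : ∀ w, #{v | F v = w} ≤ m) {f : κ → M} (hf : 0 ≤ f) :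
    ∑ v, f (F v) ≤ m • ∑ w, f w := by
  rw [← sum_fiberwise univ F, smul_sum]
  refine sum_le_sum fun w _ => ?_
  calc ∑ v with F v = w, f (F v) = #{v | F v = w} • f w := by
        rw [← sum_const]; exact sum_congr rfl fun v hv => by rw [(mem_filter.mp hv).2]
    _ ≤ m • f w := nsmul_le_nsmul_left (hf w) (hF w)

theorem AddMonoidHom.card_filter_comp_le {G H : Type*} [AddGroup G] [Fintype G] [AddGroup H]
    [Fintype H] [DecidableEq H] (L : G →+ H) (T : H → Prop) [DecidablePred T] :
    #{v | T (L v)} ≤ #{v | L v = 0} * #{w | T w} := by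
  have hfiber : ∀ w, #{v | L v = w} ≤ #{v | L v = 0} := fun w => by
    by_cases hw : w ∈ Set.range L
    · exact (AddMonoidHom.card_fiber_eq_of_mem_range L hw ⟨0, map_zero L⟩).le
    · rw [filter_false_of_mem fun v _ hv => hw ⟨v, hv⟩, card_empty]; exact Nat.zero_le _
  calc #{v | T (L v)} = ∑ v, if T (L v) then 1 else 0 := card_filter _ _
    _ ≤ #{v | L v = 0} • ∑ w, if T w then 1 else 0 :=
        sum_comp_le_nsmul_sum L hfiber (f := fun w => if T w then 1 else 0) fun _ => Nat.zero_le _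
    _ = #{v | L v = 0} * #{w | T w} := by rw [← card_filter, smul_eq_mul]

namespace Kloosterman

theorem natCast_add_one_le_mul_exp {t : ℝ} (ht : 0 < t) (k : ℕ) :
    (k + 1 : ℝ) ≤ (1 + t⁻¹) * Real.exp (k * t) := by
  have hkt : (k : ℝ) * t + 1 ≤ Real.exp (k * t) := Real.add_one_le_exp _
  have hinv : t * t⁻¹ = 1 := mul_inv_cancel₀ ht.ne'
  calc (k + 1 : ℝ) ≤ (1 + t⁻¹) * (k * t + 1) := by
        nlinarith [inv_pos.mpr ht, (k.cast_nonneg : (0 : ℝ) ≤ k)]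
    _ ≤ (1 + t⁻¹) * Real.exp (k * t) := by gcongr

theorem natCast_add_one_le_mul_pow_rpow {δ : ℝ} (hδ : 0 < δ) {p : ℕ} (hp : 2 ≤ p) (k : ℕ) :
    (k + 1 : ℝ) ≤ (1 + (δ * Real.log 2)⁻¹) * ((p : ℝ) ^ k) ^ δ := by
  have h2 : ((2 : ℝ) ^ k) ^ δ = Real.exp (k * (δ * Real.log 2)) := by
    rw [Real.rpow_def_of_pos (by positivity), Real.log_pow]; ring_nf
  calc (k + 1 : ℝ) ≤ (1 + (δ * Real.log 2)⁻¹) * ((2 : ℝ) ^ k) ^ δ := by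
        rw [h2]; exact natCast_add_one_le_mul_exp (by positivity) k
    _ ≤ (1 + (δ * Real.log 2)⁻¹) * ((p : ℝ) ^ k) ^ δ := by
        have : (2 : ℝ) ≤ p := by exact_mod_cast hp
        have : 0 ≤ (δ * Real.log 2)⁻¹ := by positivity
        gcongr

theorem natCast_add_one_le_pow_rpow {δ : ℝ} {p : ℝ} (hp : 0 ≤ p) (h2 : 2 ≤ p ^ δ)
    (k : ℕ) : (k + 1 : ℝ) ≤ (p ^ k) ^ δ := by
  rw [← Real.rpow_natCast, ← Real.rpow_mul hp, mul_comm, Real.rpow_mul hp, Real.rpow_natCast]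
  calc (k + 1 : ℝ) ≤ 2 ^ k := by exact_mod_cast Nat.lt_two_pow_self
    _ ≤ (p ^ δ) ^ k := by gcongr

theorem card_divisors_le_mul_rpow {δ : ℝ} (hδ : 0 < δ) :
    ∃ C : ℝ, 0 < C ∧ ∀ n : ℕ, n ≠ 0 → (#n.divisors : ℝ) ≤ C * (n : ℝ) ^ δ := by
  set B : ℝ := 1 + (δ * Real.log 2)⁻¹
  have hB : 1 ≤ B := le_add_of_nonneg_right (by positivity)
  set P : ℕ := ⌈(2 : ℝ) ^ δ⁻¹⌉₊
  refine ⟨B ^ P, by positivity, fun n hn => ?_⟩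
  -- The factor `(k + 1) / p^{kδ}` of `τ(n) / n^δ` at `p^k ∥ n` is at most `1` once `p^δ ≥ 2`,
  -- and at most `B` for each of the fewer than `P` smaller primes.
  have hfactor : ∀ p ∈ n.primeFactors, ((n.factorization p + 1 : ℕ) : ℝ) ≤
      (if p < P then B else 1) * ((p : ℝ) ^ n.factorization p) ^ δ := by
    intro p hp
    have hp2 := (Nat.prime_of_mem_primeFactors hp).two_le
    push_cast
    split_ifs with hpP
    · exact natCast_add_one_le_mul_pow_rpow hδ hp2 _
    · rw [one_mul]
      refine natCast_add_one_le_pow_rpow (by positivity) ?_ _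
      calc (2 : ℝ) = ((2 : ℝ) ^ δ⁻¹) ^ δ := by
            rw [← Real.rpow_mul (by norm_num), inv_mul_cancel₀ hδ.ne', Real.rpow_one]
        _ ≤ (p : ℝ) ^ δ := by
            gcongr
            exact (Nat.le_ceil _).trans (by exact_mod_cast not_lt.mp hpP)
  have hsmall : ∏ p ∈ n.primeFactors, (if p < P then B else 1) ≤ B ^ P := by
    rw [prod_ite, prod_const, prod_const_one, mul_one]
    refine pow_le_pow_right₀ hB ((card_le_card fun p hp => ?_).trans (card_range P).le)
    exact mem_range.mpr (mem_filter.mp hp).2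
  calc (#n.divisors : ℝ) = ∏ p ∈ n.primeFactors, ((n.factorization p + 1 : ℕ) : ℝ) := by
        rw [Nat.card_divisors hn, Nat.cast_prod]
    _ ≤ ∏ p ∈ n.primeFactors, (if p < P then B else 1) * ((p : ℝ) ^ n.factorization p) ^ δ :=
        prod_le_prod (fun _ _ => by positivity) hfactor
    _ = (∏ p ∈ n.primeFactors, (if p < P then B else 1)) * (n : ℝ) ^ δ := by
        rw [prod_mul_distrib, Real.finsetProd_rpow _ _ (fun _ _ => by positivity)]
        congr 2
        exact_mod_cast (Nat.prod_primeFactors_pow_factorization hn).symm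
    _ ≤ B ^ P * (n : ℝ) ^ δ := by gcongr

theorem le_totient_mul_card_divisors (n : ℕ) : n ≤ n.totient * #n.divisors := by
  calc n = ∑ d ∈ n.divisors, d.totient := (Nat.sum_totient n).symm
    _ ≤ ∑ _d ∈ n.divisors, n.totient := sum_le_sum fun d hd => by
        obtain ⟨hdn, hn⟩ := Nat.mem_divisors.mp hd
        exact Nat.le_of_dvd (Nat.totient_pos.mpr (Nat.pos_of_ne_zero hn))
          (Nat.totient_dvd_of_dvd hdn)
    _ = n.totient * #n.divisors := by rw [sum_const, smul_eq_mul, mul_comm]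

theorem le_mul_rpow_of_pow_four_le {X A g c ε : ℝ} (hA : 0 ≤ A) (hg : 0 ≤ g) (hc : 0 < c)
    (h : X ^ 4 ≤ A * g * c ^ 3 * (c ^ (4 * ε / 3)) ^ 3) :
    X ≤ A ^ ((1 : ℝ) / 4) * c ^ ((3 : ℝ) / 4 + ε) * g ^ ((1 : ℝ) / 4) := by
  have hroot : ∀ x : ℝ, 0 ≤ x → (x ^ ((1 : ℝ) / 4)) ^ 4 = x := fun x hx => by
    simpa using Real.rpow_inv_natCast_pow hx (n := 4) four_ne_zero
  have hcpow : (c ^ ((3 : ℝ) / 4 + ε)) ^ 4 = c ^ 3 * (c ^ (4 * ε / 3)) ^ 3 := by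
    rw [← Real.rpow_natCast, ← Real.rpow_natCast _ 3, ← Real.rpow_natCast (_ ^ _) 3,
      ← Real.rpow_mul hc.le, ← Real.rpow_mul hc.le, ← Real.rpow_add hc]
    norm_num
    ring_nf
  refine le_of_pow_le_pow_left₀ four_ne_zero (by positivity) (h.trans_eq ?_)
  simp only [mul_pow]
  rw [hcpow, hroot A hA, hroot g hg]
  ring

section SumInv

variable {R : Type*} [CommRing R]

def sumInvPair (p : Rˣ × Rˣ) : R × R := (p.1 + p.2, ↑p.1⁻¹ + ↑p.2⁻¹)

theorem add_mul_sub_mul_sub_eq_zero_of_sumInvPair_eq {x y : Rˣ × Rˣ}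
    (h : sumInvPair x = sumInvPair y) : ((x.1 : R) + x.2) * ((y.1 - x.1) * (y.1 - x.2)) = 0 := by
  simp only [sumInvPair, Prod.mk.injEq] at h
  obtain ⟨hsum, hinv⟩ := h
  -- With `s = x₁ + x₂ = y₁ + y₂`: `(y₁ - x₁)(y₁ - x₂) = x₁x₂ - y₁y₂`, and clearing denominators
  -- in `x̄₁ + x̄₂ = ȳ₁ + ȳ₂` gives `s·y₁y₂ = s·x₁x₂`.
  linear_combination (x.1 * x.2 : R) * ((1 - (↑x.1⁻¹ + ↑x.2⁻¹) * y.1) * hsum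
      - (y.1 * y.2 : R) * hinv - (y.2 : R) * y.1.mul_inv - (y.1 : R) * y.2.mul_inv)
    + ((x.1 + x.2 : R) * y.1 - (y.1 : R) ^ 2) *
      ((x.2 : R) * x.1.mul_inv + (x.1 : R) * x.2.mul_inv)

variable [Fintype R] [DecidableEq R]

variable (R) in
def sumInvEnergy : ℕ := #{q : (Rˣ × Rˣ) × (Rˣ × Rˣ) | sumInvPair q.1 = sumInvPair q.2}

theorem sumInvEnergy_le_card_filter :
    sumInvEnergy R ≤
      #{w : R × R × R | (w.1 + w.2.1) * ((w.2.2 - w.1) * (w.2.2 - w.2.1)) = 0} := by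
  refine card_le_card_of_injOn (fun q => ((q.1.1 : R), (q.1.2 : R), (q.2.1 : R)))
    (fun q hq => ?_) fun q hq q' hq' hqq' => ?_
  · simpa using add_mul_sub_mul_sub_eq_zero_of_sumInvPair_eq (mem_filter.mp hq).2
  · simp only [Prod.mk.injEq] at hqq'
    obtain ⟨h1, h2, h3⟩ := hqq'
    have hs := congrArg Prod.fst (mem_filter.mp hq).2
    have hs' := congrArg Prod.fst (mem_filter.mp hq').2
    simp only [sumInvPair] at hs hs'
    refine Prod.ext (Prod.ext (Units.ext h1) (Units.ext h2))
      (Prod.ext (Units.ext h3) (Units.ext ?_))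
    rw [h1, h2, h3] at hs
    exact add_left_cancel (hs.symm.trans hs')

end SumInv

section Characters

variable {R : Type*} [CommRing R] [Fintype R] [DecidableEq R] (ψ : AddChar R ℂ)

def kloostermanSum (α β : R) : ℂ := ∑ n : Rˣ, ψ (α * n + β * ↑n⁻¹)

theorem kloostermanSum_mul_units (α β : R) (t : Rˣ) :
    kloostermanSum ψ (α * t) (β * ↑t⁻¹) = kloostermanSum ψ α β :=
  Fintype.sum_equiv (Equiv.mulLeft t) _ _ fun n => by
    simp only [Equiv.coe_mulLeft, Units.val_mul, mul_inv_rev]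
    congr 1
    ring

theorem kloostermanSum_sq (α β : R) :
    kloostermanSum ψ α β ^ 2 =
      ∑ p : Rˣ × Rˣ, ψ (α * (sumInvPair p).1 + β * (sumInvPair p).2) := by
  rw [sq, kloostermanSum, sum_mul_sum, ← univ_product_univ, sum_product]
  refine sum_congr rfl fun m _ => sum_congr rfl fun n _ => ?_
  rw [← AddChar.map_add_eq_mul, sumInvPair]
  congr 1
  ring

theorem sum_norm_sq_sum_addChar (hψ : ψ.IsPrimitive) {ι : Type*} [Fintype ι]
    (v : ι → R × R) :
    ∑ w : R × R, ‖∑ i, ψ (w.1 * (v i).1 + w.2 * (v i).2)‖ ^ 2 =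
      Fintype.card R ^ 2 * #{q : ι × ι | v q.1 = v q.2} := by
  apply Complex.ofReal_injective
  have hexpand : ∀ w : R × R, ((‖∑ i, ψ (w.1 * (v i).1 + w.2 * (v i).2)‖ ^ 2 : ℝ) : ℂ) =
      ∑ q : ι × ι, ψ (w.1 * ((v q.1).1 - (v q.2).1)) * ψ (w.2 * ((v q.1).2 - (v q.2).2)) := by
    intro w
    rw [← Complex.normSq_eq_norm_sq, ← Complex.mul_conj, map_sum, sum_mul_sum,
      ← univ_product_univ, sum_product]
    refine sum_congr rfl fun i _ => sum_congr rfl fun j _ => ?_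
    rw [← AddChar.map_neg_eq_conj, ← AddChar.map_add_eq_mul, ← AddChar.map_add_eq_mul]
    congr 1
    ring
  have horth : ∀ q : ι × ι, ∑ w : R × R,
      ψ (w.1 * ((v q.1).1 - (v q.2).1)) * ψ (w.2 * ((v q.1).2 - (v q.2).2)) =
        if v q.1 = v q.2 then (Fintype.card R : ℂ) ^ 2 else 0 := by
    intro q
    rw [Fintype.sum_prod_type]
    dsimp only
    rw [← sum_mul_sum, AddChar.sum_mulShift _ hψ, AddChar.sum_mulShift _ hψ]
    simp only [Prod.ext_iff, sub_eq_zero]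
    split_ifs <;> simp_all [sq]
  rw [Complex.ofReal_sum, sum_congr rfl fun w _ => hexpand w, sum_comm,
    sum_congr rfl fun q _ => horth q, sum_ite, sum_const_zero, add_zero, sum_const, nsmul_eq_mul]
  push_cast
  ring

theorem sum_norm_pow_four_kloostermanSum (hψ : ψ.IsPrimitive) :
    ∑ w : R × R, ‖kloostermanSum ψ w.1 w.2‖ ^ 4 = Fintype.card R ^ 2 * sumInvEnergy R := by
  simp only [show ∀ z : ℂ, ‖z‖ ^ 4 = ‖z ^ 2‖ ^ 2 by intro z; rw [norm_pow, ← pow_mul],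
    kloostermanSum_sq]
  exact_mod_cast sum_norm_sq_sum_addChar ψ hψ sumInvPair

theorem card_filter_mul_units_eq_le (α β : R) (w : R × R) :
    #{t : Rˣ | (α * t, β * ↑t⁻¹) = w} ≤ #{x : R | α * x = 0 ∧ β * x = 0} := by
  rcases (filter (fun t : Rˣ => (α * t, β * ↑t⁻¹) = w) univ).eq_empty_or_nonempty with
    hempty | ⟨t₀, ht₀⟩
  · rw [hempty, card_empty]; exact Nat.zero_le _
  refine card_le_card_of_injOn (fun t => (t : R) - t₀) (fun t ht => ?_)
    fun t _ s _ hts => Units.ext (sub_left_injective hts)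
  have heq := (mem_filter.mp ht).2.trans (mem_filter.mp ht₀).2.symm
  simp only [Prod.mk.injEq] at heq
  simp only [coe_filter, mem_univ, true_and, Set.mem_ofPred_eq]
  constructor
  · linear_combination heq.1
  · linear_combination (-(t * t₀ : R)) * heq.2 - β * t * t₀.mul_inv + β * t₀ * t.mul_inv

theorem card_units_mul_norm_pow_four_le (α β : R) :
    Fintype.card Rˣ * ‖kloostermanSum ψ α β‖ ^ 4 ≤
      #{x : R | α * x = 0 ∧ β * x = 0} * ∑ w : R × R, ‖kloostermanSum ψ w.1 w.2‖ ^ 4 := by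
  calc Fintype.card Rˣ * ‖kloostermanSum ψ α β‖ ^ 4
      = ∑ t : Rˣ, ‖kloostermanSum ψ (α * t) (β * ↑t⁻¹)‖ ^ 4 := by
        simp only [kloostermanSum_mul_units, sum_const, card_univ, nsmul_eq_mul]
    _ ≤ #{x : R | α * x = 0 ∧ β * x = 0} • ∑ w : R × R, ‖kloostermanSum ψ w.1 w.2‖ ^ 4 :=
        sum_comp_le_nsmul_sum (fun t : Rˣ => (α * t, β * ↑t⁻¹))
          (card_filter_mul_units_eq_le α β) (f := fun w => ‖kloostermanSum ψ w.1 w.2‖ ^ 4)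
          fun _ => by positivity
    _ = _ := nsmul_eq_mul _ _

end Characters

section ZMod

variable {c : ℕ} [NeZero c]

theorem card_filter_natCast_mul_eq_zero_le (g : ℕ) :
    #{x : ZMod c | (g : ZMod c) * x = 0} ≤ g.gcd c := by
  have hbezout : ((g.gcd c : ℕ) : ZMod c) = g * (g.gcdA c : ZMod c) := by
    have := congrArg (Int.cast : ℤ → ZMod c) (Nat.gcd_eq_gcd_ab g c)
    push_cast at this
    rwa [ZMod.natCast_self, zero_mul, add_zero] at this
  refine (card_le_card fun x hx => ?_).trans
    (IsAddCyclic.card_nsmul_eq_zero_le (Nat.gcd_pos_of_pos_right _ (NeZero.pos c)))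
  simp only [mem_filter, mem_univ, true_and] at hx ⊢
  rw [nsmul_eq_mul, hbezout, mul_right_comm, hx, zero_mul]

theorem card_filter_mul_eq_zero_le (e : ZMod c) : #{x | e * x = 0} ≤ e.val.gcd c := by
  simpa only [ZMod.natCast_zmod_val] using card_filter_natCast_mul_eq_zero_le (c := c) e.val

theorem card_filter_dvd_val_le {d : ℕ} (hd : d ∣ c) : #{x : ZMod c | d ∣ x.val} ≤ c / d := by
  refine (card_le_card fun x hx => ?_).trans ((card_filter_natCast_mul_eq_zero_le (c / d)).trans
    (Nat.gcd_eq_left (Nat.div_dvd_of_dvd hd)).le)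
  obtain ⟨k, hk⟩ := (mem_filter.mp hx).2
  simp only [mem_filter, mem_univ, true_and]
  rw [← ZMod.natCast_zmod_val x, hk, ← Nat.cast_mul, ← mul_assoc, Nat.div_mul_cancel hd,
    Nat.cast_mul, ZMod.natCast_self, zero_mul]

theorem sum_gcd_val_le : ∑ x : ZMod c, x.val.gcd c ≤ c * #c.divisors := by
  have hc := NeZero.ne c
  calc ∑ x : ZMod c, x.val.gcd c ≤ ∑ x : ZMod c, ∑ d ∈ c.divisors, if d ∣ x.val then d else 0 :=
        sum_le_sum fun x _ => by
          refine le_of_eq_of_le (if_pos (Nat.gcd_dvd_left _ _)).symm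
            (single_le_sum (f := fun d => if d ∣ x.val then d else 0) (fun _ _ => Nat.zero_le _)
              (Nat.mem_divisors.mpr ⟨Nat.gcd_dvd_right _ _, hc⟩))
    _ = ∑ d ∈ c.divisors, #{x : ZMod c | d ∣ x.val} * d := by
        rw [sum_comm]; simp only [← sum_filter, sum_const, smul_eq_mul]
    _ ≤ ∑ _d ∈ c.divisors, c := sum_le_sum fun d hd =>
        (Nat.mul_le_mul_right d (card_filter_dvd_val_le (Nat.dvd_of_mem_divisors hd))).trans
          (Nat.div_mul_le_self c d)
    _ = c * #c.divisors := by rw [sum_const, smul_eq_mul, mul_comm]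

theorem card_filter_mul_mul_eq_zero_le :
    #{w : ZMod c × ZMod c × ZMod c | w.1 * (w.2.1 * w.2.2) = 0} ≤
      (∑ x : ZMod c, x.val.gcd c) ^ 2 := by
  have hgcd : ∀ s x : ZMod c, (s * x).val.gcd c ≤ s.val.gcd c * x.val.gcd c := fun s x => by
    rw [ZMod.val_mul, ← Nat.gcd_rec, Nat.gcd_comm]
    have hc := NeZero.pos c
    exact Nat.le_of_dvd (Nat.mul_pos (Nat.gcd_pos_of_pos_right _ hc)
      (Nat.gcd_pos_of_pos_right _ hc)) (Nat.gcd_mul_left_dvd_mul_gcd c _ _)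
  calc #{w : ZMod c × ZMod c × ZMod c | w.1 * (w.2.1 * w.2.2) = 0}
      = ∑ s : ZMod c, ∑ x : ZMod c, #{y : ZMod c | s * x * y = 0} := by
        simp only [card_filter, Fintype.sum_prod_type, mul_assoc]
    _ ≤ ∑ s : ZMod c, ∑ x : ZMod c, s.val.gcd c * x.val.gcd c :=
        sum_le_sum fun s _ => sum_le_sum fun x _ =>
          (card_filter_mul_eq_zero_le _).trans (hgcd s x)
    _ = (∑ x : ZMod c, x.val.gcd c) ^ 2 := by rw [sq, sum_mul_sum]

theorem card_filter_add_mul_sub_mul_sub_eq_zero_le :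
    #{w : ZMod c × ZMod c × ZMod c | (w.1 + w.2.1) * ((w.2.2 - w.1) * (w.2.2 - w.2.1)) = 0} ≤
      2 * #{w : ZMod c × ZMod c × ZMod c | w.1 * (w.2.1 * w.2.2) = 0} := by
  let L : ZMod c × ZMod c × ZMod c →+ ZMod c × ZMod c × ZMod c :=
    AddMonoidHom.mk' (fun w => (w.1 + w.2.1, w.2.2 - w.1, w.2.2 - w.2.1)) fun v w => by
      ext <;> simp only [Prod.fst_add, Prod.snd_add] <;> ring
  have hker : ∀ w ∈ ({w | L w = 0} : Finset _), w.2.1 = w.1 ∧ w.2.2 = w.1 ∧ w.1 + w.1 = 0 := by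
    intro w hw
    have h := (mem_filter.mp hw).2
    simp only [L, AddMonoidHom.mk'_apply, Prod.mk_eq_zero, sub_eq_zero] at h
    exact ⟨h.2.2.symm.trans h.2.1, h.2.1, by linear_combination h.1 - h.2.1 + h.2.2⟩
  have hcard_ker : #{w | L w = 0} ≤ 2 := by
    refine (card_le_card_of_injOn Prod.fst (fun w hw => ?_) fun v hv w hw hvw => ?_).trans
      (IsAddCyclic.card_nsmul_eq_zero_le two_pos)
    · simpa only [coe_filter, mem_univ, true_and, Set.mem_ofPred_eq, two_nsmul] using
        (hker w hw).2.2
    · obtain ⟨hv₁, hv₂, -⟩ := hker v hv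
      obtain ⟨hw₁, hw₂, -⟩ := hker w hw
      exact Prod.ext hvw (Prod.ext (by rw [hv₁, hw₁, hvw]) (by rw [hv₂, hw₂, hvw]))
  exact (AddMonoidHom.card_filter_comp_le L fun w => w.1 * (w.2.1 * w.2.2) = 0).trans
    (Nat.mul_le_mul_right _ hcard_ker)

theorem sumInvEnergy_zmod_le : sumInvEnergy (ZMod c) ≤ 2 * (c * #c.divisors) ^ 2 :=
  calc sumInvEnergy (ZMod c)
      ≤ #{w : ZMod c × ZMod c × ZMod c | (w.1 + w.2.1) * ((w.2.2 - w.1) * (w.2.2 - w.2.1)) = 0} :=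
        sumInvEnergy_le_card_filter
    _ ≤ 2 * #{w : ZMod c × ZMod c × ZMod c | w.1 * (w.2.1 * w.2.2) = 0} :=
        card_filter_add_mul_sub_mul_sub_eq_zero_le
    _ ≤ 2 * (∑ x : ZMod c, x.val.gcd c) ^ 2 :=
        Nat.mul_le_mul_left 2 card_filter_mul_mul_eq_zero_le
    _ ≤ 2 * (c * #c.divisors) ^ 2 := by gcongr; exact sum_gcd_val_le

theorem card_filter_intCast_mul_eq_zero_le (a b : ℤ) :
    #{x : ZMod c | (a : ZMod c) * x = 0 ∧ (b : ZMod c) * x = 0} ≤ Int.gcd a (Int.gcd b c) := by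
  have hbezout : ((Int.gcd a b : ℕ) : ZMod c) = a * (a.gcdA b : ZMod c) + b * (a.gcdB b) := by
    have := congrArg (Int.cast : ℤ → ZMod c) (Int.gcd_eq_gcd_ab a b)
    push_cast at this
    exact this
  refine (card_le_card fun x hx => ?_).trans
    ((card_filter_natCast_mul_eq_zero_le (Int.gcd a b)).trans (le_of_eq ?_))
  · simp only [mem_filter, mem_univ, true_and] at hx ⊢
    rw [hbezout]
    linear_combination (a.gcdA b : ZMod c) * hx.1 + (a.gcdB b : ZMod c) * hx.2
  · simp [Int.gcd, Nat.gcd_assoc]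

theorem norm_kloostermanSum_pow_four_le (a b : ℤ) :
    ‖kloostermanSum ZMod.stdAddChar (a : ZMod c) (b : ZMod c)‖ ^ 4 ≤
      2 * Int.gcd a (Int.gcd b c) * (c : ℝ) ^ 3 * #c.divisors ^ 3 := by
  have hmoment := card_units_mul_norm_pow_four_le ZMod.stdAddChar (a : ZMod c) (b : ZMod c)
  rw [sum_norm_pow_four_kloostermanSum _ (ZMod.isPrimitive_stdAddChar c), ZMod.card,
    ZMod.card_units_eq_totient] at hmoment
  have hG : (#{x : ZMod c | (a : ZMod c) * x = 0 ∧ (b : ZMod c) * x = 0} : ℝ) ≤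
      Int.gcd a (Int.gcd b c) := by
    exact_mod_cast card_filter_intCast_mul_eq_zero_le a b
  have hE : (sumInvEnergy (ZMod c) : ℝ) ≤ 2 * (c * #c.divisors) ^ 2 := by
    exact_mod_cast sumInvEnergy_zmod_le
  have hφ : (c : ℝ) ≤ c.totient * #c.divisors := by exact_mod_cast le_totient_mul_card_divisors c
  set X := ‖kloostermanSum ZMod.stdAddChar (a : ZMod c) (b : ZMod c)‖ ^ 4
  set g : ℝ := (Int.gcd a (Int.gcd b c) : ℝ)
  set τ : ℝ := (#c.divisors : ℝ)
  refine le_of_mul_le_mul_left ?_ (Nat.cast_pos.mpr (NeZero.pos c))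
  calc (c : ℝ) * X ≤ τ * (c.totient * X) := by
        rw [← mul_assoc, mul_comm τ]; exact mul_le_mul_of_nonneg_right hφ (by positivity)
    _ ≤ τ * (g * (c ^ 2 * (2 * (c * τ) ^ 2))) :=
        mul_le_mul_of_nonneg_left (hmoment.trans (by gcongr)) (by positivity)
    _ = c * (2 * g * (c : ℝ) ^ 3 * τ ^ 3) := by ring

theorem sum_exp_eq_kloostermanSum (a b : ℤ) :
    ∑ n : (ZMod c)ˣ, Complex.exp (2 * Real.pi * Complex.I *
      ((a * (((n : ZMod c).val : ℤ) : ℂ) + b * ((((n⁻¹ : (ZMod c)ˣ) : ZMod c).val : ℤ) : ℂ))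
        / (c : ℂ))) = kloostermanSum ZMod.stdAddChar (a : ZMod c) (b : ZMod c) := by
  refine sum_congr rfl fun n _ => ?_
  have := ZMod.stdAddChar_coe (N := c)
    (a * (n : ZMod c).val + b * ((n⁻¹ : (ZMod c)ˣ) : ZMod c).val)
  push_cast [ZMod.natCast_zmod_val] at this
  rw [this]
  congr 1
  push_cast
  ring

end ZMod

end Kloosterman

open Kloosterman

theorem stmt_18 (ε : ℝ) (hε : 0 < ε) : ∃ C : ℝ, 0 < C ∧
    ∀ (a b : ℤ) (c : ℕ) [NeZero c],
      ‖∑ n : (ZMod c)ˣ,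
          Complex.exp (2 * Real.pi * Complex.I *
            ((a * (((n : ZMod c).val : ℤ) : ℂ) + b * ((((n⁻¹ : (ZMod c)ˣ) : ZMod c).val : ℤ) : ℂ))
              / (c : ℂ)))‖ ≤
        C * (c : ℝ) ^ ((3 : ℝ) / 4 + ε) * (Int.gcd a (Int.gcd b (c : ℤ)) : ℝ) ^ ((1 : ℝ) / 4) := by
  obtain ⟨K, hK, hτ⟩ := card_divisors_le_mul_rpow (δ := 4 * ε / 3) (by positivity)
  refine ⟨(2 * K ^ 3) ^ ((1 : ℝ) / 4), by positivity, fun a b c _ => ?_⟩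
  rw [sum_exp_eq_kloostermanSum]
  refine le_mul_rpow_of_pow_four_le (by positivity) (by positivity)
    (Nat.cast_pos.mpr (NeZero.pos c)) ?_
  calc ‖kloostermanSum ZMod.stdAddChar (a : ZMod c) (b : ZMod c)‖ ^ 4
      ≤ 2 * Int.gcd a (Int.gcd b c) * (c : ℝ) ^ 3 * #c.divisors ^ 3 :=
        norm_kloostermanSum_pow_four_le a b
    _ ≤ 2 * Int.gcd a (Int.gcd b c) * (c : ℝ) ^ 3 * (K * (c : ℝ) ^ (4 * ε / 3)) ^ 3 := by
        gcongr
        exact hτ c (NeZero.ne c)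
    _ = 2 * K ^ 3 * Int.gcd a (Int.gcd b c) * (c : ℝ) ^ 3 * ((c : ℝ) ^ (4 * ε / 3)) ^ 3 := by
        ring
end
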